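/- arXiv:2503.02384 — 8 statements merged into one kernel-verified Lean document; each statement's English description precedes it below -/
import Mathlib

section
/- For any x ∈ {0,1}^T and p ∈ [0,1]^T, defining stepCE(x,p) := sup_{α ∈ [0,1]} |Σ_{t=1}^T (x_t − p_t)·1[p_t ≤ α]| and W(x,p) := sup_{α ∈ [0,1]} |Σ_{t=1}^T (x_t − p_t)·sgn(α − p_t)|, one has (1/3)·W(x,p) ≤ stepCE(x,p) ≤ W(x,p). -/
open Finset

private noncomputable def Af (T : ℕ) (x p : Fin T → ℝ) (α : ℝ) : ℝ :=
  ∑ t, (x t - p t) * (if p t ≤ α then (1:ℝ) else 0)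

private noncomputable def Bf (T : ℕ) (x p : Fin T → ℝ) (α : ℝ) : ℝ :=
  ∑ t, (x t - p t) * (if p t < α then (1:ℝ) else 0)

private noncomputable def Vf (T : ℕ) (x p : Fin T → ℝ) (α : ℝ) : ℝ :=
  ∑ t, (x t - p t) * Real.sign (α - p t)

/-- step calibration error is equivalent up to a factor 3 to the
sign-function variant of V-Calibration. -/
theorem stepCE_equiv_sgn_variant (T : ℕ) (x p : Fin T → ℝ)
    (hx : ∀ t, x t = 0 ∨ x t = 1) (hp : ∀ t, p t ∈ Set.Icc (0:ℝ) 1) :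
    (1/3) * sSup {v : ℝ | ∃ α ∈ Set.Icc (0:ℝ) 1,
        v = |∑ t, (x t - p t) * Real.sign (α - p t)|} ≤
      sSup {v : ℝ | ∃ α ∈ Set.Icc (0:ℝ) 1,
        v = |∑ t, (x t - p t) * (if p t ≤ α then (1:ℝ) else 0)|} ∧
    sSup {v : ℝ | ∃ α ∈ Set.Icc (0:ℝ) 1,
        v = |∑ t, (x t - p t) * (if p t ≤ α then (1:ℝ) else 0)|} ≤
      sSup {v : ℝ | ∃ α ∈ Set.Icc (0:ℝ) 1,
        v = |∑ t, (x t - p t) * Real.sign (α - p t)|} := by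
  show (1/3) * sSup {v : ℝ | ∃ α ∈ Set.Icc (0:ℝ) 1, v = |Vf T x p α|} ≤
      sSup {v : ℝ | ∃ α ∈ Set.Icc (0:ℝ) 1, v = |Af T x p α|} ∧
    sSup {v : ℝ | ∃ α ∈ Set.Icc (0:ℝ) 1, v = |Af T x p α|} ≤
      sSup {v : ℝ | ∃ α ∈ Set.Icc (0:ℝ) 1, v = |Vf T x p α|}
  set Sstep : Set ℝ := {v : ℝ | ∃ α ∈ Set.Icc (0:ℝ) 1, v = |Af T x p α|} with hSstep
  set Ssgn : Set ℝ := {v : ℝ | ∃ α ∈ Set.Icc (0:ℝ) 1, v = |Vf T x p α|} with hSsgn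
  set D : ℝ := ∑ t, (x t - p t) with hD
  have h01 : (0:ℝ) ∈ Set.Icc (0:ℝ) 1 := by constructor <;> norm_num
  have h11 : (1:ℝ) ∈ Set.Icc (0:ℝ) 1 := by constructor <;> norm_num
  -- boundedness
  have hCstep : ∀ α, |Af T x p α| ≤ ∑ t, |x t - p t| := by
    intro α
    refine le_trans (Finset.abs_sum_le_sum_abs _ _) (Finset.sum_le_sum fun t _ => ?_)
    rw [abs_mul]
    refine mul_le_of_le_one_right (abs_nonneg _) ?_
    split <;> simp
  have hCsgn : ∀ α, |Vf T x p α| ≤ ∑ t, |x t - p t| := by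
    intro α
    refine le_trans (Finset.abs_sum_le_sum_abs _ _) (Finset.sum_le_sum fun t _ => ?_)
    rw [abs_mul]
    refine mul_le_of_le_one_right (abs_nonneg _) ?_
    rcases lt_trichotomy (α - p t) 0 with h | h | h
    · rw [Real.sign_of_neg h]; norm_num
    · rw [h, Real.sign_zero]; norm_num
    · rw [Real.sign_of_pos h]; norm_num
  have hbddStep : BddAbove Sstep := ⟨∑ t, |x t - p t|, by
    rintro v ⟨α, hα, rfl⟩; exact hCstep α⟩
  have hbddSgn : BddAbove Ssgn := ⟨∑ t, |x t - p t|, by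
    rintro v ⟨α, hα, rfl⟩; exact hCsgn α⟩
  have hneStep : Sstep.Nonempty := ⟨|Af T x p 0|, 0, h01, rfl⟩
  have hneSgn : Ssgn.Nonempty := ⟨|Vf T x p 0|, 0, h01, rfl⟩
  have hMstep : ∀ α ∈ Set.Icc (0:ℝ) 1, |Af T x p α| ≤ sSup Sstep := by
    intro α hα; exact le_csSup hbddStep ⟨α, hα, rfl⟩
  have hMsgn : ∀ α ∈ Set.Icc (0:ℝ) 1, |Vf T x p α| ≤ sSup Ssgn := by
    intro α hα; exact le_csSup hbddSgn ⟨α, hα, rfl⟩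
  -- the basic identity V = A + B - D
  have hVid : ∀ α, Vf T x p α = Af T x p α + Bf T x p α - D := by
    intro α
    have hterm : ∀ t : Fin T, (x t - p t) * Real.sign (α - p t) =
        (x t - p t) * (if p t ≤ α then (1:ℝ) else 0) +
        (x t - p t) * (if p t < α then (1:ℝ) else 0) - (x t - p t) := by
      intro t
      rcases lt_trichotomy (p t) α with h | h | h
      · rw [Real.sign_of_pos (by linarith), if_pos h.le, if_pos h]; ring
      · rw [h, sub_self, Real.sign_zero, if_pos le_rfl, if_neg (lt_irrefl _)]; ring
      · rw [Real.sign_of_neg (by linarith), if_neg (not_le.mpr h),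
          if_neg (not_lt.mpr h.le)]; ring
    simp only [Vf, Af, Bf, hD]
    rw [Finset.sum_congr rfl fun t _ => hterm t, Finset.sum_sub_distrib,
      Finset.sum_add_distrib]
  -- D ≤ V 1 and -D ≤ V 0
  have hDV1 : D ≤ Vf T x p 1 := by
    refine Finset.sum_le_sum fun t _ => ?_
    rcases lt_or_eq_of_le (hp t).2 with h | h
    · rw [Real.sign_of_pos (by linarith), mul_one]
    · rw [h, sub_self, Real.sign_zero, mul_zero]
      rcases hx t with hxt | hxt <;> rw [hxt] <;> norm_num
  have hDV0 : -D ≤ Vf T x p 0 := by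
    rw [hD, ← Finset.sum_neg_distrib]
    refine Finset.sum_le_sum fun t _ => ?_
    rcases lt_or_eq_of_le (hp t).1 with h | h
    · rw [Real.sign_of_neg (by linarith), mul_neg_one]
    · rw [← h, sub_self, Real.sign_zero, mul_zero]
      rcases hx t with hxt | hxt <;> rw [hxt] <;> norm_num
  have hDW : |D| ≤ sSup Ssgn := by
    rw [abs_le]
    constructor
    · have := le_trans (le_abs_self _) (hMsgn 0 h01); linarith
    · exact le_trans hDV1 (le_trans (le_abs_self _) (hMsgn 1 h11))
  -- lower bound : every |A α| is at most sSup Ssgn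
  have hstep_le : ∀ α ∈ Set.Icc (0:ℝ) 1, |Af T x p α| ≤ sSup Ssgn := by
    intro α hα
    by_cases hcase : ∀ t, p t ≤ α
    · have hAD : Af T x p α = D := by
        simp only [Af, hD]
        exact Finset.sum_congr rfl fun t _ => by rw [if_pos (hcase t), mul_one]
      rw [hAD]; exact hDW
    · push_neg at hcase
      obtain ⟨t₁, ht₁⟩ := hcase
      have hsne : (Finset.univ.filter (fun t => α < p t)).Nonempty :=
        ⟨t₁, by simp [ht₁]⟩
      set m : ℝ := (Finset.univ.filter (fun t => α < p t)).inf' hsne p with hm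
      have hαm : α < m := (Finset.lt_inf'_iff hsne).mpr fun t ht =>
        (Finset.mem_filter.mp ht).2
      have hm1 : m ≤ 1 := by
        obtain ⟨t₀, _, hmeq⟩ := Finset.exists_mem_eq_inf' hsne p
        rw [hm, hmeq]; exact (hp t₀).2
      set β : ℝ := (α + m) / 2 with hβ
      have hαβ : α < β := by rw [hβ]; linarith
      have hβm : β < m := by rw [hβ]; linarith
      have hβI : β ∈ Set.Icc (0:ℝ) 1 := ⟨by linarith [hα.1], by linarith⟩
      have hmle : ∀ t : Fin T, α < p t → m ≤ p t := fun t ht =>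
        Finset.inf'_le p (Finset.mem_filter.mpr ⟨Finset.mem_univ t, ht⟩)
      have hAβ : Af T x p β = Af T x p α := by
        refine Finset.sum_congr rfl fun t _ => ?_
        by_cases hpt : p t ≤ α
        · rw [if_pos hpt, if_pos (le_trans hpt hαβ.le)]
        · have h1 : α < p t := not_le.mp hpt
          rw [if_neg hpt, if_neg (not_le.mpr (lt_of_lt_of_le hβm (hmle t h1)))]
      have hBβ : Bf T x p β = Af T x p α := by
        refine Finset.sum_congr rfl fun t _ => ?_
        by_cases hpt : p t ≤ α
        · rw [if_pos (lt_of_le_of_lt hpt hαβ), if_pos hpt]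
        · have h1 : α < p t := not_le.mp hpt
          rw [if_neg (not_lt.mpr (le_trans hβm.le (hmle t h1))), if_neg hpt]
      have hV2 : Vf T x p β = 2 * Af T x p α - D := by
        rw [hVid β, hAβ, hBβ]; ring
      have hVW : |Vf T x p β| ≤ sSup Ssgn := hMsgn β hβI
      have hDW' := hDW
      rw [abs_le] at hVW hDW' ⊢
      constructor <;> [skip; skip] <;> rw [hV2] at hVW <;>
        [linarith [hVW.1, hDW'.1]; linarith [hVW.2, hDW'.2]]
  -- upper bound : every |V α| is at most 3 * sSup Sstep
  have hDA1 : D = Af T x p 1 := by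
    simp only [Af, hD]
    exact Finset.sum_congr rfl fun t _ => by rw [if_pos (hp t).2, mul_one]
  have hDM : |D| ≤ sSup Sstep := by rw [hDA1]; exact hMstep 1 h11
  have hsgn_le : ∀ α ∈ Set.Icc (0:ℝ) 1, |Vf T x p α| ≤ 3 * sSup Sstep := by
    intro α hα
    have hAM : |Af T x p α| ≤ sSup Sstep := hMstep α hα
    have hBM : |Bf T x p α| ≤ sSup Sstep := by
      by_cases hne : (Finset.univ.filter (fun t => p t < α)).Nonempty
      · set β' : ℝ := (Finset.univ.filter (fun t => p t < α)).sup' hne p with hβ'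
        obtain ⟨t₀, ht₀, hβeq⟩ := Finset.exists_mem_eq_sup' hne p
        have hβlt : β' < α := by
          rw [hβ', hβeq]; exact (Finset.mem_filter.mp ht₀).2
        have hβI : β' ∈ Set.Icc (0:ℝ) 1 := by
          rw [hβ', hβeq]; exact hp t₀
        have hBA : Bf T x p α = Af T x p β' := by
          refine Finset.sum_congr rfl fun t _ => ?_
          by_cases hpt : p t < α
          · rw [if_pos hpt, if_pos (Finset.le_sup' p
              (Finset.mem_filter.mpr ⟨Finset.mem_univ t, hpt⟩))]
          · rw [if_neg hpt, if_neg fun h => hpt (lt_of_le_of_lt h hβlt)]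
        rw [hBA]; exact hMstep β' hβI
      · have hB0 : Bf T x p α = 0 := by
          refine Finset.sum_eq_zero fun t _ => ?_
          have : ¬ p t < α := fun h => hne ⟨t, by simp [h]⟩
          rw [if_neg this, mul_zero]
        rw [hB0, abs_zero]
        exact le_trans (abs_nonneg _) (hMstep 0 h01)
    rw [hVid α]
    calc |Af T x p α + Bf T x p α - D| ≤ |Af T x p α + Bf T x p α| + |D| :=
          abs_sub _ _
      _ ≤ |Af T x p α| + |Bf T x p α| + |D| := by
          linarith [abs_add_le (Af T x p α) (Bf T x p α)]
      _ ≤ 3 * sSup Sstep := by linarith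
  have h2 : sSup Sstep ≤ sSup Ssgn :=
    csSup_le hneStep (by rintro v ⟨α, hα, rfl⟩; exact hstep_le α hα)
  have h1 : sSup Ssgn ≤ 3 * sSup Sstep :=
    csSup_le hneSgn (by rintro v ⟨α, hα, rfl⟩; exact hsgn_le α hα)
  exact ⟨by linarith, h2⟩
end

section
/- For any x ∈ {0,1}^T and p ∈ [0,1]^T, stepCE(x,p) ≥ (1/2)·sup_{α ∈ [0,1]} max{X₋(α) − α·N₋(α), α·N₊(α) − X₊(α)}, where stepCE(x,p) := sup_{α ∈ [0,1]} |Σ_t (x_t − p_t)·1[p_t ≤ α]|, N₋(α) = #{t : p_t < α}, N₊(α) = #{t : p_t > α}, X₋(α) = Σ_t x_t·1[p_t < α], X₊(α) = Σ_t x_t·1[p_t > α]. -/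
open Finset

/-- the step calibration error is at least half of the
alternative-form V-Calibration quantity. -/
theorem stepCE_ge_half_VCal (T : ℕ) (x p : Fin T → ℝ)
    (hx : ∀ t, x t = 0 ∨ x t = 1) (hp : ∀ t, p t ∈ Set.Icc (0:ℝ) 1) :
    sSup {v : ℝ | ∃ α ∈ Set.Icc (0:ℝ) 1,
        v = |∑ t, (x t - p t) * (if p t ≤ α then (1:ℝ) else 0)|} ≥
      (1/2) * sSup {v : ℝ | ∃ α ∈ Set.Icc (0:ℝ) 1,
        v = max ((∑ t, x t * (if p t < α then (1:ℝ) else 0))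
                  - α * ∑ t, (if p t < α then (1:ℝ) else 0))
                (α * (∑ t, (if α < p t then (1:ℝ) else 0))
                  - ∑ t, x t * (if α < p t then (1:ℝ) else 0))} := by
  set S1 := {v : ℝ | ∃ α ∈ Set.Icc (0:ℝ) 1,
        v = |∑ t, (x t - p t) * (if p t ≤ α then (1:ℝ) else 0)|} with hS1def
  have hbdd : BddAbove S1 := by
    refine ⟨∑ t, |x t - p t|, ?_⟩
    rintro v ⟨α, hα, rfl⟩
    calc |∑ t, (x t - p t) * (if p t ≤ α then (1:ℝ) else 0)|
        ≤ ∑ t, |(x t - p t) * (if p t ≤ α then (1:ℝ) else 0)| :=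
          Finset.abs_sum_le_sum_abs _ _
      _ ≤ ∑ t, |x t - p t| := by
          apply Finset.sum_le_sum
          intro t _
          rw [abs_mul]
          split_ifs <;> simp [abs_nonneg]
  set M := sSup S1 with hM
  have hmem : ∀ β ∈ Set.Icc (0:ℝ) 1,
      |∑ t, (x t - p t) * (if p t ≤ β then (1:ℝ) else 0)| ≤ M :=
    fun β hβ => le_csSup hbdd ⟨β, hβ, rfl⟩
  have h0 : 0 ≤ M := le_trans (abs_nonneg _) (hmem 1 ⟨zero_le_one, le_refl 1⟩)
  -- rewrite indicator sums as filtered sums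
  have erw : ∀ (c : Fin T → Prop) [DecidablePred c] (f : Fin T → ℝ),
      ∑ t, f t * (if c t then (1:ℝ) else 0) = ∑ t ∈ univ.filter c, f t := by
    intro c _ f
    rw [Finset.sum_filter]
    exact Finset.sum_congr rfl fun t _ => by split_ifs <;> simp
  have erw1 : ∀ (c : Fin T → Prop) [DecidablePred c],
      ∑ t, (if c t then (1:ℝ) else 0) = ∑ t ∈ univ.filter c, (1:ℝ) := by
    intro c _
    rw [Finset.sum_filter]
  have key : sSup {v : ℝ | ∃ α ∈ Set.Icc (0:ℝ) 1,
        v = max ((∑ t, x t * (if p t < α then (1:ℝ) else 0))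
                  - α * ∑ t, (if p t < α then (1:ℝ) else 0))
                (α * (∑ t, (if α < p t then (1:ℝ) else 0))
                  - ∑ t, x t * (if α < p t then (1:ℝ) else 0))} ≤ 2 * M := by
    apply Real.sSup_le
    · rintro v ⟨α, hα, rfl⟩
      apply max_le
      · -- part A
        rw [erw (fun t => p t < α) x, erw1 (fun t => p t < α)]
        set F := univ.filter (fun t => p t < α) with hF
        have hA : (∑ t ∈ F, x t) - α * ∑ t ∈ F, (1:ℝ) = ∑ t ∈ F, (x t - α) := by
          rw [Finset.mul_sum, ← Finset.sum_sub_distrib]; simp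
        rw [hA]
        rcases F.eq_empty_or_nonempty with hFe | hFne
        · rw [hFe, Finset.sum_empty]; linarith
        · obtain ⟨s, hs, hsup⟩ := Finset.exists_mem_eq_sup' hFne p
          set β := F.sup' hFne p with hβ
          have hsF : p s < α := (Finset.mem_filter.mp hs).2
          have hβIcc : β ∈ Set.Icc (0:ℝ) 1 := by rw [hsup]; exact hp s
          have hfilt : univ.filter (fun t => p t ≤ β) = F := by
            ext t
            simp only [Finset.mem_filter, Finset.mem_univ, true_and, hF]
            constructor
            · intro h
              calc p t ≤ β := h
                _ = p s := hsup
                _ < α := hsF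
            · intro h
              exact Finset.le_sup' p (Finset.mem_filter.mpr ⟨Finset.mem_univ t, h⟩)
          have h1 : ∑ t ∈ F, (x t - α) ≤ ∑ t ∈ F, (x t - p t) := by
            apply Finset.sum_le_sum
            intro t ht
            have : p t < α := (Finset.mem_filter.mp ht).2
            linarith
          have h2 : ∑ t ∈ F, (x t - p t) ≤ M := by
            have := hmem β hβIcc
            rw [erw (fun t => p t ≤ β) (fun t => x t - p t), hfilt] at this
            calc ∑ t ∈ F, (x t - p t) ≤ |∑ t ∈ F, (x t - p t)| := le_abs_self _
              _ ≤ M := this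
          linarith
      · -- part B
        rw [erw (fun t => α < p t) x, erw1 (fun t => α < p t)]
        set G := univ.filter (fun t => α < p t) with hG
        have hB : α * (∑ t ∈ G, (1:ℝ)) - ∑ t ∈ G, x t = ∑ t ∈ G, (α - x t) := by
          rw [Finset.mul_sum, ← Finset.sum_sub_distrib]; simp
        rw [hB]
        have h1 : ∑ t ∈ G, (α - x t) ≤ ∑ t ∈ G, (p t - x t) := by
          apply Finset.sum_le_sum
          intro t ht
          have : α < p t := (Finset.mem_filter.mp ht).2
          linarith
        have hsplit : (∑ t ∈ G, (p t - x t)) +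
            (∑ t ∈ univ.filter (fun t => ¬ α < p t), (p t - x t)) =
            ∑ t, (p t - x t) :=
          Finset.sum_filter_add_sum_filter_not univ _ _
        have hfilt2 : univ.filter (fun t => ¬ α < p t) = univ.filter (fun t => p t ≤ α) := by
          apply Finset.filter_congr
          intro t _
          simp [not_lt]
        have hSα : -M ≤ ∑ t ∈ univ.filter (fun t => p t ≤ α), (x t - p t) ∧
            ∑ t ∈ univ.filter (fun t => p t ≤ α), (x t - p t) ≤ M := by
          have := hmem α hα
          rw [erw (fun t => p t ≤ α) (fun t => x t - p t)] at this
          exact abs_le.mp this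
        have hS1' : -M ≤ ∑ t, (x t - p t) ∧ ∑ t, (x t - p t) ≤ M := by
          have := hmem 1 ⟨zero_le_one, le_refl 1⟩
          rw [erw (fun t => p t ≤ (1:ℝ)) (fun t => x t - p t)] at this
          have hall : univ.filter (fun t => p t ≤ (1:ℝ)) = (univ : Finset (Fin T)) := by
            apply Finset.filter_true_of_mem
            intro t _
            exact (hp t).2
          rw [hall] at this
          exact abs_le.mp this
        have e3 : ∑ t ∈ univ.filter (fun t => ¬ α < p t), (p t - x t) =
            - ∑ t ∈ univ.filter (fun t => p t ≤ α), (x t - p t) := by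
          rw [hfilt2, ← Finset.sum_neg_distrib]
          exact Finset.sum_congr rfl fun t _ => by ring
        have e4 : ∑ t, (p t - x t) = - ∑ t, (x t - p t) := by
          rw [← Finset.sum_neg_distrib]
          exact Finset.sum_congr rfl fun t _ => by ring
        rw [e3, e4] at hsplit
        linarith [hSα.1, hSα.2, hS1'.1, hS1'.2]
    · linarith
  linarith
end

section
/- Let T be even, x_t = 1 and p_t = 1/2 − ε for t ≤ T/2, and x_t = 0, p_t = 1/2 + ε for t > T/2, where ε ∈ (0, 1/2). Then with α = 1/2: X₋(α) − α·N₋(α) = T/4, where N₋(α) = #{t : p_t < α} and X₋(α) = Σ_t x_t·1[p_t < α]. Hence 2·sup_{α ∈ [0,1]} max{X₋(α) − α·N₋(α), α·N₊(α) − X₊(α)} ≥ T/2, while the constant prediction p̃_t = 1/2 satisfies sup_α max{X̃₋(α) − α·Ñ₋(α), α·Ñ₊(α) − X̃₊(α)} = 0 and ‖p − p̃‖_∞ = ε. -/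
open Finset

/-- discontinuity of V-Calibration: ones predicted `1/2 - ε` followed by
zeros predicted `1/2 + ε` yields V-Calibration error at least `T/2`, while the
nearby constant prediction `1/2` has V-Calibration error `0`. -/
theorem vcal_discontinuity (T : ℕ) (hT : 0 < T) (hTeven : Even T)
    (ε : ℝ) (hε : ε ∈ Set.Ioo (0:ℝ) (1/2))
    (x p : Fin T → ℝ)
    (hx : ∀ t, x t = if (t : ℕ) < T / 2 then 1 else 0)
    (hp : ∀ t, p t = if (t : ℕ) < T / 2 then 1/2 - ε else 1/2 + ε) :
    ((∑ t, x t * (if p t < (1/2 : ℝ) then (1:ℝ) else 0))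
        - (1/2) * ∑ t, (if p t < (1/2 : ℝ) then (1:ℝ) else 0)) = T / 4 ∧
    (T : ℝ) / 2 ≤
      2 * sSup {v : ℝ | ∃ α ∈ Set.Icc (0:ℝ) 1,
        v = max ((∑ t, x t * (if p t < α then (1:ℝ) else 0))
                  - α * ∑ t, (if p t < α then (1:ℝ) else 0))
                (α * (∑ t, (if α < p t then (1:ℝ) else 0))
                  - ∑ t, x t * (if α < p t then (1:ℝ) else 0))} ∧
    sSup {v : ℝ | ∃ α ∈ Set.Icc (0:ℝ) 1,
        v = max ((∑ t, x t * (if (1/2 : ℝ) < α then (1:ℝ) else 0))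
                  - α * ∑ t : Fin T, (if (1/2 : ℝ) < α then (1:ℝ) else 0))
                (α * (∑ t : Fin T, (if α < (1/2 : ℝ) then (1:ℝ) else 0))
                  - ∑ t, x t * (if α < (1/2 : ℝ) then (1:ℝ) else 0))} = 0 ∧
    (⨆ t : Fin T, |p t - 1/2|) = ε := by
  obtain ⟨hε0, hε2⟩ := hε
  -- counting lemma
  have hTr : ((T/2 : ℕ) : ℝ) = (T:ℝ)/2 := by
    have h2 : (T/2) * 2 = T := Nat.div_mul_cancel hTeven.two_dvd
    have := congrArg (fun n : ℕ => (n:ℝ)) h2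
    push_cast at this
    linarith
  have hcount : (∑ t : Fin T, (if (t:ℕ) < T/2 then (1:ℝ) else 0)) = (T:ℝ)/2 := by
    rw [Fin.sum_univ_eq_sum_range (fun i => if i < T/2 then (1:ℝ) else 0) T,
      Finset.sum_boole]
    have h1 : (range T).filter (· < T/2) = range (T/2) := by
      ext i
      simp only [mem_filter, mem_range]
      exact ⟨fun h => h.2, fun h => ⟨lt_of_lt_of_le h (Nat.div_le_self _ _), h⟩⟩
    rw [h1, Finset.card_range, hTr]
  have hxind : ∀ t : Fin T, x t * (if (t:ℕ) < T/2 then (1:ℝ) else 0)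
      = if (t:ℕ) < T/2 then (1:ℝ) else 0 := by
    intro t; rw [hx t]; by_cases h : (t:ℕ) < T/2 <;> simp [h]
  have hsumx : (∑ t, x t) = (T:ℝ)/2 := by
    calc (∑ t, x t) = ∑ t : Fin T, (if (t:ℕ) < T/2 then (1:ℝ) else 0) := by
          exact Finset.sum_congr rfl fun t _ => hx t
      _ = (T:ℝ)/2 := hcount
  have hind : ∀ t : Fin T, (if p t < (1/2:ℝ) then (1:ℝ) else 0)
      = if (t:ℕ) < T/2 then (1:ℝ) else 0 := by
    intro t; rw [hp t]
    by_cases h : (t:ℕ) < T/2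
    · rw [if_pos h, if_pos h, if_pos (by linarith)]
    · rw [if_neg h, if_neg h, if_neg (by push_neg; linarith)]
  have part1 : ((∑ t, x t * (if p t < (1/2 : ℝ) then (1:ℝ) else 0))
        - (1/2) * ∑ t, (if p t < (1/2 : ℝ) then (1:ℝ) else 0)) = (T:ℝ) / 4 := by
    simp only [hind, hxind, hcount]
    ring
  refine ⟨part1, ?_, ?_, ?_⟩
  · -- part 2
    set S := {v : ℝ | ∃ α ∈ Set.Icc (0:ℝ) 1,
        v = max ((∑ t, x t * (if p t < α then (1:ℝ) else 0))
                  - α * ∑ t, (if p t < α then (1:ℝ) else 0))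
                (α * (∑ t, (if α < p t then (1:ℝ) else 0))
                  - ∑ t, x t * (if α < p t then (1:ℝ) else 0))} with hS
    have hbdd : BddAbove S := by
      refine ⟨(T:ℝ), ?_⟩
      rintro v ⟨α, ⟨hα0, hα1⟩, rfl⟩
      have hind01 : ∀ (c : Prop) [Decidable c], (0:ℝ) ≤ (if c then (1:ℝ) else 0) ∧
          (if c then (1:ℝ) else 0) ≤ 1 := by
        intro c _; split_ifs <;> norm_num
      have hx01 : ∀ t : Fin T, (0:ℝ) ≤ x t ∧ x t ≤ 1 := by
        intro t; rw [hx t]; split_ifs <;> norm_num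
      have hA : ∀ (q : Fin T → Prop) [DecidablePred q],
          (∑ t, x t * (if q t then (1:ℝ) else 0)) ≤ (T:ℝ) ∧
          (0:ℝ) ≤ ∑ t, x t * (if q t then (1:ℝ) else 0) ∧
          (0:ℝ) ≤ ∑ t, (if q t then (1:ℝ) else 0) ∧
          (∑ t, (if q t then (1:ℝ) else 0)) ≤ (T:ℝ) := by
        intro q _
        refine ⟨?_, ?_, ?_, ?_⟩
        · calc (∑ t, x t * (if q t then (1:ℝ) else 0)) ≤ ∑ _t : Fin T, (1:ℝ) :=
                Finset.sum_le_sum fun t _ =>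
                  mul_le_one₀ (hx01 t).2 (hind01 (q t)).1 (hind01 (q t)).2
            _ = (T:ℝ) := by simp
        · exact Finset.sum_nonneg fun t _ => mul_nonneg (hx01 t).1 (hind01 (q t)).1
        · exact Finset.sum_nonneg fun t _ => (hind01 (q t)).1
        · calc (∑ t, (if q t then (1:ℝ) else 0)) ≤ ∑ _t : Fin T, (1:ℝ) :=
                Finset.sum_le_sum fun t _ => (hind01 (q t)).2
            _ = (T:ℝ) := by simp
      obtain ⟨h1, h2, h3, h4⟩ := hA (fun t => p t < α)
      obtain ⟨h1', h2', h3', h4'⟩ := hA (fun t => α < p t)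
      apply max_le
      · nlinarith
      · nlinarith
    have hmem : max ((∑ t, x t * (if p t < (1/2:ℝ) then (1:ℝ) else 0))
                  - (1/2) * ∑ t, (if p t < (1/2:ℝ) then (1:ℝ) else 0))
                ((1/2) * (∑ t, (if (1/2:ℝ) < p t then (1:ℝ) else 0))
                  - ∑ t, x t * (if (1/2:ℝ) < p t then (1:ℝ) else 0)) ∈ S := by
      exact ⟨1/2, ⟨by norm_num, by norm_num⟩, rfl⟩
    have hle := le_csSup hbdd hmem
    have : (T:ℝ)/4 ≤ sSup S := le_trans (part1 ▸ le_max_left _ _) hle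
    linarith
  · -- part 3
    have hset : {v : ℝ | ∃ α ∈ Set.Icc (0:ℝ) 1,
        v = max ((∑ t, x t * (if (1/2 : ℝ) < α then (1:ℝ) else 0))
                  - α * ∑ t : Fin T, (if (1/2 : ℝ) < α then (1:ℝ) else 0))
                (α * (∑ t : Fin T, (if α < (1/2 : ℝ) then (1:ℝ) else 0))
                  - ∑ t, x t * (if α < (1/2 : ℝ) then (1:ℝ) else 0))} = {0} := by
      ext v
      simp only [Set.mem_setOf_eq, Set.mem_singleton_iff]
      constructor
      · rintro ⟨α, ⟨hα0, hα1⟩, rfl⟩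
        by_cases hgt : (1/2:ℝ) < α
        · have hlt : ¬ α < (1/2:ℝ) := by linarith
          simp only [if_pos hgt, if_neg hlt, mul_one, mul_zero, Finset.sum_const_zero,
            Finset.sum_const, nsmul_eq_mul, Finset.card_univ, Fintype.card_fin]
          rw [hsumx]
          have hT0 : (0:ℝ) ≤ (T:ℝ) := Nat.cast_nonneg T
          have : (T:ℝ)/2 - α * T ≤ 0 := by nlinarith
          rw [max_eq_right (by linarith)]
          norm_num
        · by_cases hlt : α < (1/2:ℝ)
          · simp only [if_neg hgt, if_pos hlt, mul_one, mul_zero, Finset.sum_const_zero,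
              Finset.sum_const, nsmul_eq_mul, Finset.card_univ, Fintype.card_fin]
            rw [hsumx]
            have hT0 : (0:ℝ) ≤ (T:ℝ) := Nat.cast_nonneg T
            have : α * T - (T:ℝ)/2 ≤ 0 := by nlinarith
            rw [max_eq_left (by linarith)]
            simp
          · simp only [if_neg hgt, if_neg hlt, mul_zero, Finset.sum_const_zero,
              sub_zero, mul_one, max_self]
      · rintro rfl
        refine ⟨1/2, ⟨by norm_num, by norm_num⟩, ?_⟩
        norm_num
    rw [hset, csSup_singleton]
  · -- part 4
    have habs : ∀ t : Fin T, |p t - 1/2| = ε := by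
      intro t; rw [hp t]
      split_ifs with h
      · rw [show (1/2 - ε - 1/2 : ℝ) = -ε by ring, abs_neg, abs_of_pos hε0]
      · rw [show (1/2 + ε - 1/2 : ℝ) = ε by ring, abs_of_pos hε0]
    haveI : Nonempty (Fin T) := Fin.pos_iff_nonempty.mp hT
    simp only [habs]
    exact ciSup_const
end

section
/- Let T be even and suppose X₁, X₂ are integers with 0 ≤ X₁, X₂ ≤ T/2 satisfying X₁ ≤ T/5, X₂ ≥ 3T/10, and 2T/5 ≤ X₁ + X₂ ≤ 3T/5. Define predictions p_t = 2/5 for t ≤ T/2 and p_t = 3/5 for t > T/2, and let x ∈ {0,1}^T be any sequence with Σ_{t ≤ T/2} x_t = X₁ and Σ_{t > T/2} x_t = X₂. Then for every α ∈ [0,1], max{X₋(α) − α·N₋(α), α·N₊(α) − X₊(α)} ≤ 0, i.e., the V-Calibration error of (x, p) is 0. -/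
open Finset

lemma sum_ind_lt' (T n : ℕ) (h : n ≤ T) :
    ∑ t : Fin T, (if (t:ℕ) < n then (1:ℝ) else 0) = n := by
  rw [Fin.sum_univ_eq_sum_range (fun i => if i < n then (1:ℝ) else 0)]
  rw [Finset.sum_ite, Finset.sum_const, Finset.sum_const_zero]
  have : (Finset.range T).filter (· < n) = Finset.range n := by
    ext i; simp; omega
  simp [this]


/-- hedged predictions `2/5` and `3/5` on events whose half-sums satisfy
the stated inequalities have zero V-Calibration error. -/
theorem hedged_predictions_zero_vcal (T : ℕ) (hTeven : Even T)
    (X₁ X₂ : ℤ) (hX₁0 : 0 ≤ X₁) (hX₂0 : 0 ≤ X₂)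
    (hX₁T : (X₁ : ℝ) ≤ T / 2) (hX₂T : (X₂ : ℝ) ≤ T / 2)
    (h₁ : (X₁ : ℝ) ≤ T / 5) (h₂ : (3 : ℝ) * T / 10 ≤ X₂)
    (h₃ : (2 : ℝ) * T / 5 ≤ X₁ + X₂) (h₄ : (X₁ : ℝ) + X₂ ≤ 3 * T / 5)
    (x p : Fin T → ℝ)
    (hx : ∀ t, x t = 0 ∨ x t = 1)
    (hp : ∀ t, p t = if (t : ℕ) < T / 2 then 2/5 else 3/5)
    (hS₁ : ∑ t, x t * (if (t : ℕ) < T / 2 then (1:ℝ) else 0) = X₁)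
    (hS₂ : ∑ t, x t * (if (t : ℕ) < T / 2 then (0:ℝ) else 1) = X₂) :
    ∀ α ∈ Set.Icc (0:ℝ) 1,
      max ((∑ t, x t * (if p t < α then (1:ℝ) else 0))
            - α * ∑ t, (if p t < α then (1:ℝ) else 0))
          (α * (∑ t, (if α < p t then (1:ℝ) else 0))
            - ∑ t, x t * (if α < p t then (1:ℝ) else 0)) ≤ 0 := by
  intro α hα
  obtain ⟨hα0, hα1⟩ := hα
  obtain ⟨n, hn⟩ := hTeven
  have hT2 : T / 2 = n := by omega
  have hTcast : (T:ℝ) = 2 * n := by rw [hn]; push_cast; ring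
  have hn0 : (0:ℝ) ≤ n := Nat.cast_nonneg n
  have hN1 : ∑ t : Fin T, (if (t:ℕ) < T / 2 then (1:ℝ) else 0) = n := by
    rw [hT2]; exact sum_ind_lt' T n (by omega)
  have hN2 : ∑ t : Fin T, (if (t:ℕ) < T / 2 then (0:ℝ) else 1) = n := by
    have key : ∀ t : Fin T, (if (t:ℕ) < T / 2 then (0:ℝ) else 1)
        = 1 - (if (t:ℕ) < T / 2 then (1:ℝ) else 0) := by
      intro t; split <;> ring
    rw [Finset.sum_congr rfl (fun t _ => key t), Finset.sum_sub_distrib, hN1]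
    simp [hTcast]; ring
  have hSx : ∑ t : Fin T, x t = (X₁:ℝ) + X₂ := by
    rw [← hS₁, ← hS₂, ← Finset.sum_add_distrib]
    refine Finset.sum_congr rfl fun t _ => ?_
    split <;> ring
  have hNfull : ∑ t : Fin T, (1:ℝ) = 2 * n := by simp [hTcast.symm]
  rcases lt_or_ge α (2/5) with hc | hc
  · -- α < 2/5
    have e1 : ∀ t : Fin T, (if p t < α then (1:ℝ) else 0) = 0 := by
      intro t; rw [hp t]; by_cases h : (t:ℕ) < T / 2
      · rw [if_pos h, if_neg (not_lt.mpr (by linarith : α ≤ 2/5))]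
      · rw [if_neg h, if_neg (not_lt.mpr (by linarith : α ≤ 3/5))]
    have e2 : ∀ t : Fin T, (if α < p t then (1:ℝ) else 0) = 1 := by
      intro t; rw [hp t]; by_cases h : (t:ℕ) < T / 2
      · rw [if_pos h, if_pos hc]
      · rw [if_neg h, if_pos (by linarith : α < 3/5)]
    have f1 : ∀ t : Fin T, x t * (if p t < α then (1:ℝ) else 0) = 0 := by
      intro t; rw [e1 t]; ring
    have f2 : ∀ t : Fin T, x t * (if α < p t then (1:ℝ) else 0) = x t := by
      intro t; rw [e2 t]; ring
    rw [Finset.sum_congr rfl (fun t _ => e1 t), Finset.sum_congr rfl (fun t _ => e2 t),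
        Finset.sum_congr rfl (fun t _ => f1 t), Finset.sum_congr rfl (fun t _ => f2 t),
        hSx, hNfull]
    simp only [Finset.sum_const_zero]
    rw [max_le_iff]
    have hmul : α * (2 * (n:ℝ)) ≤ (2/5) * (2 * n) :=
      mul_le_mul_of_nonneg_right hc.le (by positivity)
    constructor
    · linarith
    · linarith
  rcases lt_or_ge (3/5) α with hc3 | hc3
  · -- α > 3/5
    have e1 : ∀ t : Fin T, (if p t < α then (1:ℝ) else 0) = 1 := by
      intro t; rw [hp t]; by_cases h : (t:ℕ) < T / 2
      · rw [if_pos h, if_pos (by linarith : (2:ℝ)/5 < α)]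
      · rw [if_neg h, if_pos hc3]
    have e2 : ∀ t : Fin T, (if α < p t then (1:ℝ) else 0) = 0 := by
      intro t; rw [hp t]; by_cases h : (t:ℕ) < T / 2
      · rw [if_pos h, if_neg (not_lt.mpr hc)]
      · rw [if_neg h, if_neg (not_lt.mpr hc3.le)]
    have f1 : ∀ t : Fin T, x t * (if p t < α then (1:ℝ) else 0) = x t := by
      intro t; rw [e1 t]; ring
    have f2 : ∀ t : Fin T, x t * (if α < p t then (1:ℝ) else 0) = 0 := by
      intro t; rw [e2 t]; ring
    rw [Finset.sum_congr rfl (fun t _ => e1 t), Finset.sum_congr rfl (fun t _ => e2 t),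
        Finset.sum_congr rfl (fun t _ => f1 t), Finset.sum_congr rfl (fun t _ => f2 t),
        hSx, hNfull]
    simp only [Finset.sum_const_zero]
    rw [max_le_iff]
    have hmul : (3/5) * (2 * (n:ℝ)) ≤ α * (2 * n) :=
      mul_le_mul_of_nonneg_right hc3.le (by positivity)
    constructor
    · linarith
    · linarith
  rcases eq_or_lt_of_le hc with h25 | h25
  · -- α = 2/5
    subst h25
    have g1 : ∀ t : Fin T, (if p t < 2/5 then (1:ℝ) else 0) = 0 := by
      intro t; rw [hp t]; by_cases h : (t:ℕ) < T / 2
      · rw [if_pos h, if_neg (lt_irrefl _)]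
      · rw [if_neg h, if_neg (not_lt.mpr hc3)]
    have g2 : ∀ t : Fin T, (if (2:ℝ)/5 < p t then (1:ℝ) else 0)
        = (if (t:ℕ) < T / 2 then (0:ℝ) else 1) := by
      intro t; rw [hp t]; by_cases h : (t:ℕ) < T / 2
      · rw [if_pos h, if_neg (lt_irrefl _), if_pos h]
      · rw [if_neg h, if_pos (by norm_num : (2:ℝ)/5 < 3/5), if_neg h]
    have f1 : ∀ t : Fin T, x t * (if p t < 2/5 then (1:ℝ) else 0) = 0 := by
      intro t; rw [g1 t]; ring
    have f2 : ∀ t : Fin T, x t * (if (2:ℝ)/5 < p t then (1:ℝ) else 0)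
        = x t * (if (t:ℕ) < T / 2 then (0:ℝ) else 1) := by
      intro t; rw [g2 t]
    rw [Finset.sum_congr rfl (fun t _ => g1 t), Finset.sum_congr rfl (fun t _ => g2 t),
        Finset.sum_congr rfl (fun t _ => f1 t), Finset.sum_congr rfl (fun t _ => f2 t),
        hS₂, hN2]
    simp only [Finset.sum_const_zero]
    rw [max_le_iff]
    constructor
    · linarith
    · linarith
  rcases eq_or_lt_of_le hc3 with h35 | h35
  · -- α = 3/5
    subst h35
    have g1 : ∀ t : Fin T, (if p t < 3/5 then (1:ℝ) else 0)
        = (if (t:ℕ) < T / 2 then (1:ℝ) else 0) := by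
      intro t; rw [hp t]; by_cases h : (t:ℕ) < T / 2
      · rw [if_pos h, if_pos (by norm_num : (2:ℝ)/5 < 3/5), if_pos h]
      · rw [if_neg h, if_neg (lt_irrefl _), if_neg h]
    have g2 : ∀ t : Fin T, (if (3:ℝ)/5 < p t then (1:ℝ) else 0) = 0 := by
      intro t; rw [hp t]; by_cases h : (t:ℕ) < T / 2
      · rw [if_pos h, if_neg (not_lt.mpr (by norm_num : (2:ℝ)/5 ≤ 3/5))]
      · rw [if_neg h, if_neg (lt_irrefl _)]
    have f1 : ∀ t : Fin T, x t * (if p t < 3/5 then (1:ℝ) else 0)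
        = x t * (if (t:ℕ) < T / 2 then (1:ℝ) else 0) := by
      intro t; rw [g1 t]
    have f2 : ∀ t : Fin T, x t * (if (3:ℝ)/5 < p t then (1:ℝ) else 0) = 0 := by
      intro t; rw [g2 t]; ring
    rw [Finset.sum_congr rfl (fun t _ => g1 t), Finset.sum_congr rfl (fun t _ => g2 t),
        Finset.sum_congr rfl (fun t _ => f1 t), Finset.sum_congr rfl (fun t _ => f2 t),
        hS₁, hN1]
    simp only [Finset.sum_const_zero]
    rw [max_le_iff]
    constructor
    · linarith
    · linarith
  · -- 2/5 < α < 3/5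
    have g1 : ∀ t : Fin T, (if p t < α then (1:ℝ) else 0)
        = (if (t:ℕ) < T / 2 then (1:ℝ) else 0) := by
      intro t; rw [hp t]; by_cases h : (t:ℕ) < T / 2
      · rw [if_pos h, if_pos h25, if_pos h]
      · rw [if_neg h, if_neg (not_lt.mpr h35.le), if_neg h]
    have g2 : ∀ t : Fin T, (if α < p t then (1:ℝ) else 0)
        = (if (t:ℕ) < T / 2 then (0:ℝ) else 1) := by
      intro t; rw [hp t]; by_cases h : (t:ℕ) < T / 2
      · rw [if_pos h, if_neg (not_lt.mpr h25.le), if_pos h]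
      · rw [if_neg h, if_pos h35, if_neg h]
    have f1 : ∀ t : Fin T, x t * (if p t < α then (1:ℝ) else 0)
        = x t * (if (t:ℕ) < T / 2 then (1:ℝ) else 0) := by
      intro t; rw [g1 t]
    have f2 : ∀ t : Fin T, x t * (if α < p t then (1:ℝ) else 0)
        = x t * (if (t:ℕ) < T / 2 then (0:ℝ) else 1) := by
      intro t; rw [g2 t]
    rw [Finset.sum_congr rfl (fun t _ => g1 t), Finset.sum_congr rfl (fun t _ => g2 t),
        Finset.sum_congr rfl (fun t _ => f1 t), Finset.sum_congr rfl (fun t _ => f2 t),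
        hS₁, hS₂, hN1, hN2]
    rw [max_le_iff]
    have hmul1 : (2/5) * (n:ℝ) ≤ α * n := mul_le_mul_of_nonneg_right h25.le hn0
    have hmul2 : α * (n:ℝ) ≤ (3/5) * n := mul_le_mul_of_nonneg_right h35.le hn0
    constructor
    · linarith
    · linarith
end

section
/- Let p ∈ [0,1]^T be a fixed (deterministic) prediction vector, and let x_1, …, x_T be independent random variables with x_t ~ Bernoulli(p_t). Suppose p_1 ≤ p_2 ≤ ⋯ ≤ p_T. Then E[sup_{α ∈ [0,1]} |Σ_{t=1}^T (x_t − p_t)·1[p_t ≤ α]|] ≤ E[max_{t ∈ [T]} |Σ_{i=1}^t (x_i − p_i)|] ≤ 2·√(Σ_{t=1}^T p_t(1 − p_t)) + 1, i.e., the expected step calibration error of truthful forecasts on a sorted product distribution is O(√Var_T). -/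
open Finset MeasureTheory ProbabilityTheory

section Aux

variable {Ω : Type*} [MeasurableSpace Ω] {μ : Measure Ω} [IsProbabilityMeasure μ]

lemma aux_int_bdd {f : Ω → ℝ} (hf : Measurable f) {C : ℝ} (hC : ∀ ω, |f ω| ≤ C) :
    Integrable f μ :=
  (integrable_const C).mono' hf.aestronglyMeasurable
    (Filter.Eventually.of_forall (fun ω => by simpa using hC ω))

lemma aux_integral_X {X : Ω → ℝ} (hm : Measurable X) (hv : ∀ ω, X ω = 0 ∨ X ω = 1)
    {q : ℝ} (hq : 0 ≤ q) (hl : μ {ω | X ω = 1} = ENNReal.ofReal q) :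
    ∫ ω, X ω ∂μ = q := by
  have hset : MeasurableSet {ω | X ω = 1} := hm (measurableSet_singleton 1)
  have hXeq : X = Set.indicator {ω | X ω = 1} (fun _ => (1:ℝ)) := by
    funext ω
    rcases hv ω with h | h <;> simp [Set.indicator_apply, Set.mem_setOf_eq, h]
  calc ∫ ω, X ω ∂μ = ∫ ω, Set.indicator {ω | X ω = 1} (fun _ => (1:ℝ)) ω ∂μ := by rw [← hXeq]
    _ = (μ {ω | X ω = 1}).toReal • (1:ℝ) := integral_indicator_const 1 hset
    _ = q := by rw [hl, smul_eq_mul, mul_one, ENNReal.toReal_ofReal hq]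

/-- Layer-cake: a nonnegative random variable whose tail satisfies the Chebyshev-type bound
`μ{M ≥ τ} τ² ≤ V` has expectation at most `2√V + 1`. -/
lemma aux_tail_bound {M : Ω → ℝ}
    (hMint : Integrable M μ) (hMnn : ∀ ω, 0 ≤ M ω) {V : ℝ} (hV : 0 ≤ V)
    (htail : ∀ τ : ℝ, 0 < τ → (μ {ω | τ ≤ M ω}).toReal * τ ^ 2 ≤ V) :
    ∫ ω, M ω ∂μ ≤ 2 * Real.sqrt V + 1 := by
  have hMnn' : 0 ≤ᵐ[μ] M := Filter.Eventually.of_forall hMnn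
  rw [hMint.integral_eq_integral_meas_lt hMnn']
  simp only [measureReal_def]
  set f : ℝ → ℝ := fun t => (μ {a | t < M a}).toReal with hf
  have hf_nonneg : ∀ t, 0 ≤ f t := fun _ => ENNReal.toReal_nonneg
  have hf_le : ∀ t : ℝ, 0 < t → f t * t ^ 2 ≤ V := by
    intro t ht
    have hmono : (μ {a | t < M a}).toReal ≤ (μ {a | t ≤ M a}).toReal :=
      ENNReal.toReal_mono (measure_ne_top μ _)
        (measure_mono (Set.setOf_subset_setOf.mpr (fun a h => le_of_lt h)))
    have h2 := htail t ht
    nlinarith [sq_nonneg t, ENNReal.toReal_nonneg (a := μ {a | t < M a})]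
  have hf_meas : Measurable f :=
    Measurable.ennreal_toReal (Antitone.measurable
      (fun s t hst => measure_mono (fun a h => lt_of_le_of_lt hst h)))
  have hf_le_one : ∀ t, f t ≤ 1 := by
    intro t
    rw [hf]
    simpa using ENNReal.toReal_mono ENNReal.one_ne_top (prob_le_one (μ := μ))
  by_cases hV0 : V = 0
  · have hzero : Set.EqOn f (fun _ => (0:ℝ)) (Set.Ioi 0) := by
      intro t ht
      have h1 := hf_le t ht
      have h2 := hf_nonneg t
      have ht' : (0:ℝ) < t := ht
      have : f t = 0 := le_antisymm (by nlinarith [pow_pos ht' 2]) h2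
      simpa using this
    rw [setIntegral_congr_fun measurableSet_Ioi hzero]
    simp
    positivity
  · have hVpos : 0 < V := lt_of_le_of_ne hV (Ne.symm hV0)
    set c := Real.sqrt V with hc
    have hcpos : 0 < c := Real.sqrt_pos.mpr hVpos
    have hVc : V = c ^ 2 := (Real.sq_sqrt hV).symm
    have hbound : ∀ t : ℝ, 0 < t → f t ≤ V * t ^ (-2:ℝ) := by
      intro t ht
      have h1 := hf_le t ht
      have h2 : t ^ (-2:ℝ) = (t ^ 2)⁻¹ := by
        rw [Real.rpow_neg ht.le, show ((2:ℝ)) = ((2:ℕ):ℝ) by norm_num, Real.rpow_natCast]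
      rw [h2]
      calc f t = f t * t ^ 2 * (t ^ 2)⁻¹ := by field_simp
        _ ≤ V * (t ^ 2)⁻¹ := by
          apply mul_le_mul_of_nonneg_right (hf_le t ht)
          positivity
    have hint_rpow : IntegrableOn (fun t : ℝ => V * t ^ (-2:ℝ)) (Set.Ioi c) := by
      exact (integrableOn_Ioi_rpow_of_lt (by norm_num) hcpos).const_mul V
    have hint1 : IntegrableOn f (Set.Ioc 0 c) := by
      refine Integrable.mono' (g := fun _ : ℝ => (1:ℝ))
        (integrableOn_const measure_Ioc_lt_top.ne)
        hf_meas.aestronglyMeasurable.restrict ?_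
      refine Filter.Eventually.of_forall (fun t => ?_)
      rw [Real.norm_eq_abs, abs_of_nonneg (hf_nonneg t)]
      exact hf_le_one t
    have hint2 : IntegrableOn f (Set.Ioi c) := by
      refine Integrable.mono' hint_rpow hf_meas.aestronglyMeasurable.restrict ?_
      filter_upwards [ae_restrict_mem measurableSet_Ioi] with t ht
      rw [Real.norm_eq_abs, abs_of_nonneg (hf_nonneg t)]
      exact hbound t (hcpos.trans ht)
    have hIoi : Set.Ioi (0:ℝ) = Set.Ioc 0 c ∪ Set.Ioi c := (Set.Ioc_union_Ioi_eq_Ioi hcpos.le).symm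
    rw [hIoi, setIntegral_union (Set.Ioc_disjoint_Ioi le_rfl) measurableSet_Ioi hint1 hint2]
    have b1 : ∫ t in Set.Ioc (0:ℝ) c, f t ≤ c := by
      calc ∫ t in Set.Ioc (0:ℝ) c, f t
          ≤ ∫ _t in Set.Ioc (0:ℝ) c, (1:ℝ) := by
            refine setIntegral_mono_on hint1 (integrableOn_const measure_Ioc_lt_top.ne)
              measurableSet_Ioc (fun t _ => hf_le_one t)
        _ = c := by
            simp [Real.volume_Ioc, ENNReal.toReal_ofReal hcpos.le, hcpos.le]
    have b2 : ∫ t in Set.Ioi c, f t ≤ c := by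
      calc ∫ t in Set.Ioi c, f t
          ≤ ∫ t in Set.Ioi c, V * t ^ (-2:ℝ) := by
            refine setIntegral_mono_on hint2 hint_rpow measurableSet_Ioi
              (fun t ht => hbound t (hcpos.trans ht))
        _ = V * ∫ t in Set.Ioi c, t ^ (-2:ℝ) := by rw [integral_const_mul]
        _ = V * c⁻¹ := by
            rw [integral_Ioi_rpow_of_lt (by norm_num) hcpos]
            rw [show (-2:ℝ) + 1 = -1 by norm_num, Real.rpow_neg_one]
            ring
        _ = c := by rw [hVc]; field_simp
    have : Real.sqrt V = c := rfl
    nlinarith [b1, b2]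

end Aux

section Kolmogorov

variable {T : ℕ} {p : Fin T → ℝ} {Ω : Type*} [MeasurableSpace Ω] {μ : Measure Ω}
  [IsProbabilityMeasure μ] {X : Fin T → Ω → ℝ}

lemma aux_kolmogorov
    (hp : ∀ t, p t ∈ Set.Icc (0:ℝ) 1)
    (hmeas : ∀ t, Measurable (X t))
    (hval : ∀ t ω, X t ω = 0 ∨ X t ω = 1)
    (hlaw : ∀ t, μ {ω | X t ω = 1} = ENNReal.ofReal (p t))
    (hindep : iIndepFun X μ)
    {τ : ℝ} (hτ : 0 < τ) :
    (μ {ω | τ ≤ ⨆ t : Fin T, |∑ i ∈ Finset.Iic t, (X i ω - p i)|}).toReal * τ ^ 2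
      ≤ ∑ t, p t * (1 - p t) := by
  classical
  rcases Nat.eq_zero_or_pos T with hT | hT
  · subst hT
    have hempty : {ω : Ω | τ ≤ ⨆ t : Fin 0, |∑ i ∈ Finset.Iic t, (X i ω - p i)|} = ∅ := by
      ext ω
      rw [Set.mem_setOf_eq, Real.iSup_of_isEmpty]
      simp only [Set.mem_empty_iff_false, iff_false, not_le]
      exact hτ
    rw [hempty]
    simp
  have hNE : Nonempty (Fin T) := ⟨⟨0, hT⟩⟩
  set S : Fin T → Ω → ℝ := fun k ω => ∑ i ∈ Finset.Iic k, (X i ω - p i) with hSdef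
  set SL : Ω → ℝ := fun ω => ∑ i, (X i ω - p i) with hSLdef
  have hSm : ∀ k, Measurable (S k) :=
    fun k => Finset.measurable_sum _ (fun i _ => (hmeas i).sub measurable_const)
  have hSLm : Measurable SL :=
    Finset.measurable_sum _ (fun i _ => (hmeas i).sub measurable_const)
  have hD1 : ∀ i ω, |X i ω - p i| ≤ 1 := by
    intro i ω
    rcases hval i ω with h | h <;> rw [h, abs_le] <;>
      constructor <;> linarith [(hp i).1, (hp i).2]
  have hbd : ∀ (s : Finset (Fin T)) ω, |∑ i ∈ s, (X i ω - p i)| ≤ (T:ℝ) := by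
    intro s ω
    calc |∑ i ∈ s, (X i ω - p i)| ≤ ∑ i ∈ s, |X i ω - p i| := Finset.abs_sum_le_sum_abs _ _
      _ ≤ ∑ _i ∈ s, (1:ℝ) := Finset.sum_le_sum (fun i _ => hD1 i ω)
      _ = (s.card : ℝ) := by simp
      _ ≤ (T:ℝ) := by
          exact_mod_cast (Finset.card_le_card (Finset.subset_univ s)).trans_eq (Finset.card_fin T)
  have hSbd : ∀ k ω, |S k ω| ≤ (T:ℝ) := fun k ω => hbd (Finset.Iic k) ω
  have hSLbd : ∀ ω, |SL ω| ≤ (T:ℝ) := fun ω => hbd Finset.univ ω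
  have hSL2bd : ∀ ω, |SL ω ^ 2| ≤ (T:ℝ) ^ 2 := fun ω => by
    rw [abs_pow]; exact pow_le_pow_left₀ (abs_nonneg _) (hSLbd ω) 2
  have hS2bd : ∀ k ω, |S k ω ^ 2| ≤ (T:ℝ) ^ 2 := fun k ω => by
    rw [abs_pow]; exact pow_le_pow_left₀ (abs_nonneg _) (hSbd k ω) 2
  have hDm : ∀ i, Measurable (fun ω => X i ω - p i) := fun i => (hmeas i).sub measurable_const
  have hDint : ∀ i, Integrable (fun ω => X i ω - p i) μ := fun i => aux_int_bdd (hDm i) (hD1 i)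
  have hXint : ∀ i, Integrable (X i) μ := fun i => aux_int_bdd (hmeas i) (C := 1)
    (fun ω => by rcases hval i ω with h | h <;> rw [h] <;> norm_num)
  have hIntX : ∀ i, ∫ ω, X i ω ∂μ = p i :=
    fun i => aux_integral_X (hmeas i) (hval i) (hp i).1 (hlaw i)
  have hIntD : ∀ i, ∫ ω, (X i ω - p i) ∂μ = 0 := by
    intro i
    rw [integral_sub (hXint i) (integrable_const _), hIntX, integral_const]
    simp
  have hmulint : ∀ {f g : Ω → ℝ} {Cf Cg : ℝ}, Measurable f → Measurable g →
      (∀ ω, |f ω| ≤ Cf) → (∀ ω, |g ω| ≤ Cg) → Integrable (fun ω => f ω * g ω) μ := by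
    intro f g Cf Cg hf hg hCf hCg
    refine aux_int_bdd (hf.mul hg) (C := Cf * Cg) (fun ω => ?_)
    rw [abs_mul]
    exact mul_le_mul (hCf ω) (hCg ω) (abs_nonneg _) ((abs_nonneg _).trans (hCf ω))
  -- the variance identity
  have hSL2 : ∫ ω, SL ω ^ 2 ∂μ = ∑ t, p t * (1 - p t) := by
    have hprod_int : ∀ i j : Fin T, Integrable (fun ω => (X i ω - p i) * (X j ω - p j)) μ :=
      fun i j => hmulint (hDm i) (hDm j) (hD1 i) (hD1 j)
    have hcross : ∀ i j : Fin T, i ≠ j → ∫ ω, (X i ω - p i) * (X j ω - p j) ∂μ = 0 := by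
      intro i j hij
      have hind : IndepFun (fun ω => X i ω - p i) (fun ω => X j ω - p j) μ :=
        (hindep.indepFun hij).comp
          (measurable_id.sub measurable_const) (measurable_id.sub measurable_const)
      have h := hind.integral_mul_eq_mul_integral (hDint i).aestronglyMeasurable (hDint j).aestronglyMeasurable
      have h' : ∫ ω, (X i ω - p i) * (X j ω - p j) ∂μ
          = (∫ ω, (X i ω - p i) ∂μ) * ∫ ω, (X j ω - p j) ∂μ := h
      rw [h', hIntD i, hIntD j, mul_zero]
    have hdiag : ∀ i : Fin T, ∫ ω, (X i ω - p i) * (X i ω - p i) ∂μ = p i * (1 - p i) := by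
      intro i
      have heq : (fun ω => (X i ω - p i) * (X i ω - p i))
          = fun ω => (1 - 2 * p i) * X i ω + p i ^ 2 := by
        funext ω
        rcases hval i ω with h | h <;> rw [h] <;> ring
      rw [heq, integral_add ((hXint i).const_mul _) (integrable_const _),
        integral_const_mul, hIntX i, integral_const]
      simp [measure_univ]
      ring
    calc ∫ ω, SL ω ^ 2 ∂μ
        = ∫ ω, ∑ i, ∑ j, (X i ω - p i) * (X j ω - p j) ∂μ := by
          refine integral_congr_ae (Filter.Eventually.of_forall (fun ω => ?_))
          show SL ω ^ 2 = ∑ i, ∑ j, (X i ω - p i) * (X j ω - p j)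
          rw [pow_two]
          exact Finset.sum_mul_sum _ _ _ _
      _ = ∑ i, ∑ j, ∫ ω, (X i ω - p i) * (X j ω - p j) ∂μ := by
          rw [integral_finset_sum _
            (fun i _ => integrable_finset_sum _ (fun j _ => hprod_int i j))]
          exact Finset.sum_congr rfl fun i _ => integral_finset_sum _ (fun j _ => hprod_int i j)
      _ = ∑ i, p i * (1 - p i) := by
          refine Finset.sum_congr rfl fun i _ => ?_
          rw [Finset.sum_eq_single i (fun j _ hj => hcross i j (Ne.symm hj))
            (fun h => absurd (Finset.mem_univ i) h), hdiag]
  -- hitting sets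
  set A : Fin T → Set Ω := fun k => {ω | τ ≤ |S k ω| ∧ ∀ j, j < k → |S j ω| < τ} with hAdef
  have hAm : ∀ k, MeasurableSet (A k) := by
    intro k
    have hAeq : A k = {ω | τ ≤ |S k ω|} ∩ ⋂ j, {ω | j < k → |S j ω| < τ} := by
      ext ω; simp [hAdef, Set.mem_iInter]
    rw [hAeq]
    refine (measurableSet_le measurable_const (hSm k).abs).inter
      (MeasurableSet.iInter fun j => ?_)
    by_cases hj : j < k
    · simp only [hj, true_implies]
      exact measurableSet_lt (hSm j).abs measurable_const
    · simp [hj]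
  set χ : Fin T → Ω → ℝ := fun k => (A k).indicator (fun _ => (1:ℝ)) with hχdef
  set ψ : Fin T → Ω → ℝ := fun k => (A k).indicator (S k) with hψdef
  have hχm : ∀ k, Measurable (χ k) := fun k => measurable_const.indicator (hAm k)
  have hψm : ∀ k, Measurable (ψ k) := fun k => (hSm k).indicator (hAm k)
  have hχbd : ∀ k ω, |χ k ω| ≤ 1 := by
    intro k ω
    by_cases h : ω ∈ A k <;>
      simp [hχdef, Set.indicator_of_mem, Set.indicator_of_notMem, h]
  have hψbd : ∀ k ω, |ψ k ω| ≤ (T:ℝ) := by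
    intro k ω
    by_cases h : ω ∈ A k
    · rw [hψdef]; simp only [Set.indicator_of_mem h]; exact hSbd k ω
    · rw [hψdef]; simp only [Set.indicator_of_notMem h, abs_zero]
      positivity
  have hχint : ∀ k, Integrable (χ k) μ := fun k => aux_int_bdd (hχm k) (hχbd k)
  set R : Fin T → Ω → ℝ := fun k ω => ∑ i ∈ Finset.Ioi k, (X i ω - p i) with hRdef
  have hRm : ∀ k, Measurable (R k) :=
    fun k => Finset.measurable_sum _ (fun i _ => (hmeas i).sub measurable_const)
  have hRbd : ∀ k ω, |R k ω| ≤ (T:ℝ) := fun k ω => hbd (Finset.Ioi k) ω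
  have hRint : ∀ k, Integrable (R k) μ := fun k => aux_int_bdd (hRm k) (hRbd k)
  have hψint : ∀ k, Integrable (ψ k) μ := fun k => aux_int_bdd (hψm k) (hψbd k)
  have hIntR : ∀ k, ∫ ω, R k ω ∂μ = 0 := by
    intro k
    have : ∫ ω, R k ω ∂μ = ∑ i ∈ Finset.Ioi k, ∫ ω, (X i ω - p i) ∂μ :=
      integral_finset_sum _ (fun i _ => hDint i)
    rw [this]
    simp [hIntD]
  have hdisjkk : ∀ k : Fin T, Disjoint (Finset.Iic k) (Finset.Ioi k) := by
    intro k
    rw [Finset.disjoint_left]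
    intro i hi hi'
    exact absurd (Finset.mem_Ioi.mp hi') (not_lt.mpr (Finset.mem_Iic.mp hi))
  have hsplit : ∀ k ω, SL ω = S k ω + R k ω := by
    intro k ω
    have hu : Finset.Iic k ∪ Finset.Ioi k = Finset.univ := by
      ext i; simp [Finset.mem_Iic, Finset.mem_Ioi, le_or_gt]
    calc SL ω = ∑ i ∈ Finset.Iic k ∪ Finset.Ioi k, (X i ω - p i) := by rw [hu]
      _ = S k ω + R k ω := Finset.sum_union (hdisjkk k)
  -- independence of the stopped part and the future
  have hindFR : ∀ k, IndepFun (ψ k) (R k) μ := by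
    intro k
    set W : ((i : (Finset.Iic k : Finset (Fin T))) → ℝ) → Fin T → ℝ :=
      fun v j => ∑ i ∈ (Finset.Iic k).attach,
        if (i : Fin T) ≤ j then v i - p i else 0 with hWdef
    have hWm : ∀ j, Measurable (fun v => W v j) := by
      intro j
      apply Finset.measurable_sum
      intro i _
      by_cases hij : (i : Fin T) ≤ j
      · simp only [hij, if_true]
        exact (measurable_pi_apply i).sub measurable_const
      · simp only [hij, if_false]
        exact measurable_const
    set C : Set ((i : (Finset.Iic k : Finset (Fin T))) → ℝ) :=
      {v | τ ≤ |W v k| ∧ ∀ j, j < k → |W v j| < τ} with hCdef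
    have hCm : MeasurableSet C := by
      have hCeq : C = {v | τ ≤ |W v k|} ∩ ⋂ j, {v | j < k → |W v j| < τ} := by
        ext v; simp [hCdef, Set.mem_iInter]
      rw [hCeq]
      refine (measurableSet_le measurable_const (hWm k).abs).inter
        (MeasurableSet.iInter fun j => ?_)
      by_cases hj : j < k
      · simp only [hj, true_implies]
        exact measurableSet_lt (hWm j).abs measurable_const
      · simp [hj]
    set F : ((i : (Finset.Iic k : Finset (Fin T))) → ℝ) → ℝ :=
      C.indicator (fun v => W v k) with hFdef
    set G : ((i : (Finset.Ioi k : Finset (Fin T))) → ℝ) → ℝ :=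
      fun v => ∑ i ∈ (Finset.Ioi k).attach, (v i - p i) with hGdef
    have hFm : Measurable F := (hWm k).indicator hCm
    have hGm : Measurable G :=
      Finset.measurable_sum _ (fun i _ => (measurable_pi_apply i).sub measurable_const)
    have hbase :=
      ((hindep.indepFun_finset (Finset.Iic k) (Finset.Ioi k) (hdisjkk k) hmeas).comp hFm hGm)
    have hW_eq : ∀ ω, ∀ j, j ≤ k → W (fun i => X i ω) j = S j ω := by
      intro ω j hj
      calc W (fun i => X i ω) j
          = ∑ i ∈ Finset.Iic k, (if i ≤ j then X i ω - p i else 0) :=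
            Finset.sum_attach _ (fun i => if i ≤ j then X i ω - p i else 0)
        _ = ∑ i ∈ (Finset.Iic k).filter (fun i => i ≤ j), (X i ω - p i) :=
            (Finset.sum_filter _ _).symm
        _ = S j ω := by
            rw [hSdef]
            congr 1
            ext i
            simp only [Finset.mem_filter, Finset.mem_Iic]
            exact ⟨fun h => h.2, fun h => ⟨h.trans hj, h⟩⟩
    have hleft : (F ∘ fun ω (i : (Finset.Iic k : Finset (Fin T))) => X i ω) = ψ k := by
      funext ω
      have hk := hW_eq ω k le_rfl
      have hcond : ((fun (i : (Finset.Iic k : Finset (Fin T))) => X i ω) ∈ C) ↔ ω ∈ A k := by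
        simp only [hCdef, hAdef, Set.mem_setOf_eq]
        constructor
        · rintro ⟨h1, h2⟩
          refine ⟨by rwa [hk] at h1, fun j hj => ?_⟩
          have h3 := h2 j hj
          rwa [hW_eq ω j hj.le] at h3
        · rintro ⟨h1, h2⟩
          refine ⟨by rwa [hk], fun j hj => ?_⟩
          rw [hW_eq ω j hj.le]
          exact h2 j hj
      simp only [Function.comp_apply, hFdef, hψdef]
      by_cases h : ω ∈ A k
      · rw [Set.indicator_of_mem (hcond.mpr h), Set.indicator_of_mem h, hk]
      · rw [Set.indicator_of_notMem (fun hc => h (hcond.mp hc)), Set.indicator_of_notMem h]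
    have hright : (G ∘ fun ω (i : (Finset.Ioi k : Finset (Fin T))) => X i ω) = R k := by
      funext ω
      simp only [Function.comp_apply, hGdef, hRdef]
      exact Finset.sum_attach _ (fun i => X i ω - p i)
    rwa [hleft, hright] at hbase
  -- integrability of the pieces
  have hχS2int : ∀ k, Integrable (fun ω => χ k ω * S k ω ^ 2) μ :=
    fun k => hmulint (hχm k) ((hSm k).pow_const 2) (hχbd k) (hS2bd k)
  have hχSL2int : ∀ k, Integrable (fun ω => χ k ω * SL ω ^ 2) μ :=
    fun k => hmulint (hχm k) (hSLm.pow_const 2) (hχbd k) hSL2bd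
  have hψRint : ∀ k, Integrable (fun ω => ψ k ω * R k ω) μ :=
    fun k => hmulint (hψm k) (hRm k) (hψbd k) (hRbd k)
  have hR2bd : ∀ k ω, |R k ω ^ 2| ≤ (T:ℝ) ^ 2 := fun k ω => by
    rw [abs_pow]; exact pow_le_pow_left₀ (abs_nonneg _) (hRbd k ω) 2
  have hχR2int : ∀ k, Integrable (fun ω => χ k ω * R k ω ^ 2) μ :=
    fun k => hmulint (hχm k) ((hRm k).pow_const 2) (hχbd k) (hR2bd k)
  have hSL2int : Integrable (fun ω => SL ω ^ 2) μ :=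
    aux_int_bdd (hSLm.pow_const 2) hSL2bd
  -- the key per-index inequality
  have hkey : ∀ k, τ ^ 2 * (μ (A k)).toReal ≤ ∫ ω, χ k ω * SL ω ^ 2 ∂μ := by
    intro k
    have step1 : τ ^ 2 * (μ (A k)).toReal = ∫ ω, τ ^ 2 * χ k ω ∂μ := by
      have hχi : ∫ ω, χ k ω ∂μ = (μ (A k)).toReal := by
        simp only [hχdef]
        simpa [measureReal_def] using integral_indicator_const (1:ℝ) (hAm k)
      rw [integral_const_mul, hχi]
    have step2 : ∫ ω, τ ^ 2 * χ k ω ∂μ ≤ ∫ ω, χ k ω * S k ω ^ 2 ∂μ := by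
      refine integral_mono ((hχint k).const_mul _) (hχS2int k) (fun ω => ?_)
      by_cases h : ω ∈ A k
      · simp only [hχdef, Set.indicator_of_mem h]
        have h1 : τ ≤ |S k ω| := h.1
        have h2 : τ ^ 2 ≤ S k ω ^ 2 := by nlinarith [abs_nonneg (S k ω), sq_abs (S k ω)]
        simpa using h2
      · simp [hχdef, Set.indicator_of_notMem h]
    have hψR0 : ∫ ω, ψ k ω * R k ω ∂μ = 0 := by
      have h := (hindFR k).integral_mul_eq_mul_integral (hψint k).aestronglyMeasurable (hRint k).aestronglyMeasurable
      have h' : ∫ ω, ψ k ω * R k ω ∂μ = (∫ ω, ψ k ω ∂μ) * ∫ ω, R k ω ∂μ := h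
      rw [h', hIntR, mul_zero]
    have hdecomp : ∀ ω, χ k ω * SL ω ^ 2
        = χ k ω * S k ω ^ 2 + (2 * (ψ k ω * R k ω) + χ k ω * R k ω ^ 2) := by
      intro ω
      by_cases h : ω ∈ A k
      · simp only [hχdef, hψdef, Set.indicator_of_mem h]
        rw [hsplit k ω]; ring
      · simp [hχdef, hψdef, Set.indicator_of_notMem h]
    have step3 : ∫ ω, χ k ω * S k ω ^ 2 ∂μ ≤ ∫ ω, χ k ω * SL ω ^ 2 ∂μ := by
      have heq : ∫ ω, χ k ω * SL ω ^ 2 ∂μ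
          = (∫ ω, χ k ω * S k ω ^ 2 ∂μ)
            + (2 * (∫ ω, ψ k ω * R k ω ∂μ) + ∫ ω, χ k ω * R k ω ^ 2 ∂μ) := by
        calc ∫ ω, χ k ω * SL ω ^ 2 ∂μ
            = ∫ ω, (χ k ω * S k ω ^ 2 + (2 * (ψ k ω * R k ω) + χ k ω * R k ω ^ 2)) ∂μ :=
              integral_congr_ae (Filter.Eventually.of_forall hdecomp)
          _ = (∫ ω, χ k ω * S k ω ^ 2 ∂μ)
              + ∫ ω, (2 * (ψ k ω * R k ω) + χ k ω * R k ω ^ 2) ∂μ :=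
              integral_add (hχS2int k) (((hψRint k).const_mul 2).add (hχR2int k))
          _ = (∫ ω, χ k ω * S k ω ^ 2 ∂μ)
              + (2 * (∫ ω, ψ k ω * R k ω ∂μ) + ∫ ω, χ k ω * R k ω ^ 2 ∂μ) := by
              rw [integral_add ((hψRint k).const_mul 2) (hχR2int k), integral_const_mul]
      have hnn : 0 ≤ ∫ ω, χ k ω * R k ω ^ 2 ∂μ := by
        refine integral_nonneg (fun ω => ?_)
        by_cases h : ω ∈ A k
        · simp only [hχdef, Set.indicator_of_mem h]
          positivity
        · simp [hχdef, Set.indicator_of_notMem h]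
      rw [heq, hψR0]
      linarith
    calc τ ^ 2 * (μ (A k)).toReal = ∫ ω, τ ^ 2 * χ k ω ∂μ := step1
      _ ≤ ∫ ω, χ k ω * S k ω ^ 2 ∂μ := step2
      _ ≤ ∫ ω, χ k ω * SL ω ^ 2 ∂μ := step3
  -- union bound over the hitting index
  have hsubU : {ω | τ ≤ ⨆ t : Fin T, |∑ i ∈ Finset.Iic t, (X i ω - p i)|} ⊆ ⋃ k, A k := by
    intro ω hω
    have hω' : τ ≤ ⨆ t : Fin T, |S t ω| := hω
    have hex : ∃ t : Fin T, τ ≤ |S t ω| := by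
      by_contra hcon
      push_neg at hcon
      have h1 : (⨆ t : Fin T, |S t ω|)
          = Finset.univ.sup' Finset.univ_nonempty (fun t => |S t ω|) :=
        (Finset.sup'_univ_eq_ciSup _).symm
      have h2 : Finset.univ.sup' Finset.univ_nonempty (fun t => |S t ω|) < τ :=
        (Finset.sup'_lt_iff Finset.univ_nonempty).mpr (fun t _ => hcon t)
      rw [h1] at hω'
      linarith
    set Fs := Finset.univ.filter (fun t : Fin T => τ ≤ |S t ω|) with hFs
    have hFne : Fs.Nonempty := by
      obtain ⟨t, ht⟩ := hex
      exact ⟨t, by simp [hFs, ht]⟩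
    refine Set.mem_iUnion.mpr ⟨Fs.min' hFne, ?_⟩
    refine ⟨(Finset.mem_filter.mp (Fs.min'_mem hFne)).2, fun j hj => ?_⟩
    by_contra hcon2
    push_neg at hcon2
    exact absurd (Fs.min'_le j (by simp [hFs, hcon2])) (not_le.mpr hj)
  have hmeasle : (μ {ω | τ ≤ ⨆ t : Fin T, |∑ i ∈ Finset.Iic t, (X i ω - p i)|}).toReal
      ≤ ∑ k, (μ (A k)).toReal := by
    have h1 : μ {ω | τ ≤ ⨆ t : Fin T, |∑ i ∈ Finset.Iic t, (X i ω - p i)|} ≤ ∑ k, μ (A k) :=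
      le_trans (measure_mono hsubU) ((measure_iUnion_le _).trans_eq (tsum_fintype _))
    calc (μ {ω | τ ≤ ⨆ t : Fin T, |∑ i ∈ Finset.Iic t, (X i ω - p i)|}).toReal
        ≤ (∑ k, μ (A k)).toReal :=
          ENNReal.toReal_mono (by
            refine (ENNReal.sum_lt_top.mpr (fun k _ => measure_lt_top μ _)).ne) h1
      _ = ∑ k, (μ (A k)).toReal := ENNReal.toReal_sum (fun _ _ => measure_ne_top μ _)
  have hχsum : ∀ ω, ∑ k, χ k ω ≤ 1 := by
    intro ω
    have h0 : ∀ k, χ k ω = if ω ∈ A k then (1:ℝ) else 0 := by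
      intro k
      simp only [hχdef]
      rw [Set.indicator_apply]
    have h1 : ∑ k, χ k ω = ((Finset.univ.filter (fun k => ω ∈ A k)).card : ℝ) := by
      rw [Finset.sum_congr rfl (fun k _ => h0 k), Finset.sum_boole]
    rw [h1]
    have hcard1 : (Finset.univ.filter (fun k => ω ∈ A k)).card ≤ 1 := by
      rw [Finset.card_le_one]
      intro a ha b hb
      have ha' := (Finset.mem_filter.mp ha).2
      have hb' := (Finset.mem_filter.mp hb).2
      rcases lt_trichotomy a b with h | h | h
      · exact absurd ha'.1 (not_le.mpr (hb'.2 a h))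
      · exact h
      · exact absurd hb'.1 (not_le.mpr (ha'.2 b h))
    exact_mod_cast hcard1
  calc (μ {ω | τ ≤ ⨆ t : Fin T, |∑ i ∈ Finset.Iic t, (X i ω - p i)|}).toReal * τ ^ 2
      = τ ^ 2 * (μ {ω | τ ≤ ⨆ t : Fin T, |∑ i ∈ Finset.Iic t, (X i ω - p i)|}).toReal :=
        mul_comm _ _
    _ ≤ τ ^ 2 * ∑ k, (μ (A k)).toReal :=
        mul_le_mul_of_nonneg_left hmeasle (sq_nonneg τ)
    _ = ∑ k, τ ^ 2 * (μ (A k)).toReal := Finset.mul_sum _ _ _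
    _ ≤ ∑ k, ∫ ω, χ k ω * SL ω ^ 2 ∂μ := Finset.sum_le_sum (fun k _ => hkey k)
    _ = ∫ ω, ∑ k, χ k ω * SL ω ^ 2 ∂μ :=
        (integral_finset_sum _ (fun k _ => hχSL2int k)).symm
    _ ≤ ∫ ω, SL ω ^ 2 ∂μ := by
        refine integral_mono (integrable_finset_sum _ (fun k _ => hχSL2int k)) hSL2int
          (fun ω => ?_)
        rw [← Finset.sum_mul]
        exact mul_le_of_le_one_left (sq_nonneg _) (hχsum ω)
    _ = ∑ t, p t * (1 - p t) := hSL2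

end Kolmogorov

/-- on a sorted product (independent Bernoulli) distribution, the expected
step calibration error of truthful forecasts is at most the expected maximal prefix-sum
deviation, which is at most `2√Var_T + 1`. -/
theorem truthful_stepCE_product (T : ℕ) (p : Fin T → ℝ)
    (hp : ∀ t, p t ∈ Set.Icc (0:ℝ) 1)
    (hsorted : Monotone p)
    {Ω : Type*} [MeasurableSpace Ω] (μ : Measure Ω) [IsProbabilityMeasure μ]
    (X : Fin T → Ω → ℝ)
    (hmeas : ∀ t, Measurable (X t))
    (hval : ∀ t ω, X t ω = 0 ∨ X t ω = 1)
    (hlaw : ∀ t, μ {ω | X t ω = 1} = ENNReal.ofReal (p t))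
    (hindep : iIndepFun X μ) :
    (∫ ω, sSup {v : ℝ | ∃ α ∈ Set.Icc (0:ℝ) 1,
        v = |∑ t, (X t ω - p t) * (if p t ≤ α then (1:ℝ) else 0)|} ∂μ) ≤
      (∫ ω, (⨆ t : Fin T, |∑ i ∈ Finset.Iic t, (X i ω - p i)|) ∂μ) ∧
    (∫ ω, (⨆ t : Fin T, |∑ i ∈ Finset.Iic t, (X i ω - p i)|) ∂μ) ≤
      2 * Real.sqrt (∑ t, p t * (1 - p t)) + 1 := by
  set S : Fin T → Ω → ℝ := fun k ω => ∑ i ∈ Finset.Iic k, (X i ω - p i) with hS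
  set M : Ω → ℝ := fun ω => ⨆ t : Fin T, |∑ i ∈ Finset.Iic t, (X i ω - p i)| with hM
  have hSm : ∀ k, Measurable (S k) :=
    fun k => Finset.measurable_sum _ (fun i _ => (hmeas i).sub measurable_const)
  have hD1 : ∀ i ω, |X i ω - p i| ≤ 1 := by
    intro i ω
    rcases hval i ω with h | h <;> rw [h, abs_le] <;>
      constructor <;> linarith [(hp i).1, (hp i).2]
  have hSbd : ∀ k ω, |S k ω| ≤ (T : ℝ) := by
    intro k ω
    have hcard : ((Finset.Iic k).card : ℝ) ≤ (T : ℝ) := by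
      have := (Finset.card_le_card (Finset.subset_univ (Finset.Iic k))).trans_eq
        (Finset.card_fin T)
      exact_mod_cast this
    calc |S k ω| ≤ ∑ i ∈ Finset.Iic k, |X i ω - p i| := Finset.abs_sum_le_sum_abs _ _
      _ ≤ ∑ _i ∈ Finset.Iic k, (1:ℝ) := Finset.sum_le_sum (fun i _ => hD1 i ω)
      _ = ((Finset.Iic k).card : ℝ) := by simp
      _ ≤ (T : ℝ) := hcard
  have hMnn : ∀ ω, 0 ≤ M ω := fun ω => Real.iSup_nonneg fun t => abs_nonneg _
  have hMbd : ∀ ω, |M ω| ≤ (T : ℝ) := by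
    intro ω
    rw [abs_of_nonneg (hMnn ω)]
    exact Real.iSup_le (fun t => hSbd t ω) (Nat.cast_nonneg T)
  have hMm : Measurable M := by
    rcases isEmpty_or_nonempty (Fin T) with hE | hNE
    · have : M = fun _ => (0:ℝ) := by
        funext ω; exact Real.iSup_of_isEmpty _
      rw [this]; exact measurable_const
    · have h1 : M = Finset.univ.sup' Finset.univ_nonempty
          (fun t => fun ω => |S t ω|) := by
        funext ω
        rw [Finset.sup'_apply]
        exact (Finset.sup'_univ_eq_ciSup _).symm
      rw [h1]
      exact Finset.measurable_sup' _ (fun t _ => (hSm t).abs)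
  have hMint : Integrable M μ := aux_int_bdd hMm hMbd
  constructor
  · -- Part 1
    have hpt1 : ∀ ω, sSup {v : ℝ | ∃ α ∈ Set.Icc (0:ℝ) 1,
        v = |∑ t, (X t ω - p t) * (if p t ≤ α then (1:ℝ) else 0)|} ≤ M ω := by
      intro ω
      apply Real.sSup_le _ (hMnn ω)
      rintro v ⟨α, hα, rfl⟩
      have hsum : ∑ t, (X t ω - p t) * (if p t ≤ α then (1:ℝ) else 0)
          = ∑ t ∈ Finset.univ.filter (fun t => p t ≤ α), (X t ω - p t) := by
        rw [Finset.sum_filter]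
        refine Finset.sum_congr rfl fun t _ => ?_
        split_ifs <;> simp
      rw [hsum]
      rcases Finset.eq_empty_or_nonempty (Finset.univ.filter (fun t => p t ≤ α)) with he | hne
      · rw [he]
        simpa using hMnn ω
      · set t0 := Finset.max' _ hne with ht0
        have hmem := Finset.max'_mem _ hne
        have hteq : Finset.univ.filter (fun t => p t ≤ α) = Finset.Iic t0 := by
          ext s
          simp only [Finset.mem_filter, Finset.mem_univ, true_and, Finset.mem_Iic]
          constructor
          · exact fun hs => Finset.le_max' _ s (by simp [hs])
          · intro hs
            exact le_trans (hsorted hs) ((Finset.mem_filter.mp hmem).2)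
        rw [hteq]
        exact le_ciSup (f := fun t : Fin T => |∑ i ∈ Finset.Iic t, (X i ω - p i)|)
          ((Set.finite_range _).bddAbove) t0
    exact integral_mono_of_nonneg
      (Filter.Eventually.of_forall (fun ω => Real.sSup_nonneg
        (by rintro v ⟨α, hα, rfl⟩; positivity)))
      hMint (Filter.Eventually.of_forall hpt1)
  · -- Part 2
    have hV : 0 ≤ ∑ t, p t * (1 - p t) :=
      Finset.sum_nonneg fun t _ => mul_nonneg (hp t).1 (by linarith [(hp t).2])
    exact aux_tail_bound hMint hMnn hV
      (fun τ hτ => aux_kolmogorov hp hmeas hval hlaw hindep hτ)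
end

section
/- For any x ∈ {0,1}^T and p ∈ [0,1]^T, define stepCE(x,p) := sup_{α ∈ [0,1]} |Σ_t (x_t − p_t)·1[p_t ≤ α]| and stepCEsub(x,p) := E_{S ~ Unif(2^[T])}[sup_{α ∈ [0,1]} |Σ_t (x_t − p_t)·1[p_t ≤ α ∧ t ∈ S]|], where S is a uniformly random subset of [T]. Then stepCEsub(x,p) ≥ (1/2)·stepCE(x,p). -/
open Finset
open scoped Classical

lemma aux_finite (T : ℕ) (w : Fin T → ℝ) (Q : Fin T → ℝ → Prop) :
    {v : ℝ | ∃ α ∈ Set.Icc (0:ℝ) 1,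
      v = |∑ t, w t * (if Q t α then (1:ℝ) else 0)|}.Finite := by
  apply Set.Finite.subset (Set.finite_range fun s : Finset (Fin T) => |∑ t ∈ s, w t|)
  rintro v ⟨α, -, rfl⟩
  exact ⟨Finset.univ.filter fun t => Q t α,
    by simp [Finset.sum_filter, mul_ite, mul_one, mul_zero]⟩

/-- the subsampled step calibration error is at least half the step
calibration error. -/
theorem stepCEsub_ge_half_stepCE (T : ℕ) (x p : Fin T → ℝ)
    (hx : ∀ t, x t = 0 ∨ x t = 1) (hp : ∀ t, p t ∈ Set.Icc (0:ℝ) 1) :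
    (1 / 2 ^ T : ℝ) * ∑ S : Finset (Fin T),
        sSup {v : ℝ | ∃ α ∈ Set.Icc (0:ℝ) 1,
          v = |∑ t, (x t - p t) * (if p t ≤ α ∧ t ∈ S then (1:ℝ) else 0)|} ≥
      (1/2) * sSup {v : ℝ | ∃ α ∈ Set.Icc (0:ℝ) 1,
          v = |∑ t, (x t - p t) * (if p t ≤ α then (1:ℝ) else 0)|} := by
  have hAfin : {v : ℝ | ∃ α ∈ Set.Icc (0:ℝ) 1,
      v = |∑ t, (x t - p t) * (if p t ≤ α then (1:ℝ) else 0)|}.Finite :=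
    aux_finite T (fun t => x t - p t) (fun t α => p t ≤ α)
  have hAne : {v : ℝ | ∃ α ∈ Set.Icc (0:ℝ) 1,
      v = |∑ t, (x t - p t) * (if p t ≤ α then (1:ℝ) else 0)|}.Nonempty :=
    ⟨_, 0, by norm_num, rfl⟩
  obtain ⟨α, hα, hsup⟩ := hAne.csSup_mem hAfin
  set g : Finset (Fin T) → ℝ :=
    fun S => ∑ t, (x t - p t) * (if p t ≤ α ∧ t ∈ S then (1:ℝ) else 0) with hg
  have hkey : ∀ S : Finset (Fin T),
      g S + g Sᶜ = ∑ t, (x t - p t) * (if p t ≤ α then (1:ℝ) else 0) := by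
    intro S
    rw [hg]
    rw [← Finset.sum_add_distrib]
    apply Finset.sum_congr rfl
    intro t _
    by_cases hS : t ∈ S <;> by_cases hpa : p t ≤ α <;>
      simp [hS, hpa, Finset.mem_compl] <;> ring
  have hge : ∀ S : Finset (Fin T),
      |g S| ≤ sSup {v : ℝ | ∃ β ∈ Set.Icc (0:ℝ) 1,
        v = |∑ t, (x t - p t) * (if p t ≤ β ∧ t ∈ S then (1:ℝ) else 0)|} := by
    intro S
    refine le_csSup (Set.Finite.bddAbove (Set.Finite.subset
      (Set.finite_range fun s : Finset (Fin T) => |∑ t ∈ s, (x t - p t)|) ?_))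
      ⟨α, hα, rfl⟩
    rintro v ⟨β, -, rfl⟩
    refine ⟨Finset.univ.filter fun t => p t ≤ β ∧ t ∈ S, ?_⟩
    dsimp only
    rw [Finset.sum_filter]
    exact congrArg abs (Finset.sum_congr rfl fun t _ => by split_ifs <;> simp)
  have hcompl : ∑ S : Finset (Fin T), |g Sᶜ| = ∑ S : Finset (Fin T), |g S| :=
    Fintype.sum_equiv (Function.Involutive.toPerm compl compl_compl) _ _ (fun S => rfl)
  have h2 : (2:ℝ)^T * sSup {v : ℝ | ∃ α ∈ Set.Icc (0:ℝ) 1,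
      v = |∑ t, (x t - p t) * (if p t ≤ α then (1:ℝ) else 0)|}
      ≤ 2 * ∑ S : Finset (Fin T), |g S| := by
    have : ∑ S : Finset (Fin T), (|g S| + |g Sᶜ|)
        ≥ ∑ S : Finset (Fin T),
          |∑ t, (x t - p t) * (if p t ≤ α then (1:ℝ) else 0)| := by
      apply Finset.sum_le_sum
      intro S _
      rw [← hkey S]
      exact abs_add_le _ _
    rw [Finset.sum_add_distrib, hcompl] at this
    have hcard : ∑ S : Finset (Fin T),
        |∑ t, (x t - p t) * (if p t ≤ α then (1:ℝ) else 0)|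
        = 2^T * |∑ t, (x t - p t) * (if p t ≤ α then (1:ℝ) else 0)| := by
      rw [Finset.sum_const, Finset.card_univ, Fintype.card_finset, Fintype.card_fin]
      push_cast
      ring
    rw [hsup]
    rw [hcard] at this
    linarith
  have h3 : ∑ S : Finset (Fin T), |g S|
      ≤ ∑ S : Finset (Fin T), sSup {v : ℝ | ∃ α ∈ Set.Icc (0:ℝ) 1,
        v = |∑ t, (x t - p t) * (if p t ≤ α ∧ t ∈ S then (1:ℝ) else 0)|} :=
    Finset.sum_le_sum fun S _ => hge S
  have hpow : (0:ℝ) < 2^T := by positivity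
  rw [ge_iff_le, div_mul_eq_mul_div, one_mul, div_mul_eq_mul_div, one_mul,
    div_le_div_iff₀ two_pos hpow]
  linarith
end

section
/- Let x ∈ {0,1}^T and p ∈ [0,1]^T with p_1 ≤ p_2 ≤ ⋯ ≤ p_T, and let y_1, …, y_T be i.i.d. uniform on {0,1}. Then E_y[sup_{α ∈ [0,1]} |Σ_t y_t·(x_t − p_t)·1[p_t ≤ α]|] ≤ (1/2)·max_{t ∈ [T]} |Σ_{i=1}^t (x_i − p_i)| + 2·√(T/4) = (1/2)·stepCE(x,p) + √T. -/
open Finset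
open scoped Classical

namespace SCE17

variable {T : ℕ}

noncomputable def eps (y : Fin T → Bool) (i : Fin T) : ℝ := if y i then 1/2 else -1/2

def flip (j : Fin T) (y : Fin T → Bool) : Fin T → Bool := Function.update y j (!(y j))

lemma flip_invol (j : Fin T) : Function.Involutive (flip j) := by
  intro y; funext i
  by_cases h : i = j
  · subst h; simp [flip]
  · simp [flip, Function.update_of_ne h]

lemma sum_flip (j : Fin T) (F : (Fin T → Bool) → ℝ) :
    ∑ y : Fin T → Bool, F (flip j y) = ∑ y : Fin T → Bool, F y :=
  Fintype.sum_bijective (flip j) (flip_invol j).bijective _ _ (fun _ => rfl)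

lemma eps_flip_same (j : Fin T) (y : Fin T → Bool) : eps (flip j y) j = - eps y j := by
  simp only [eps, flip, Function.update_self]
  cases y j <;> norm_num

lemma eps_flip_ne {i j : Fin T} (h : i ≠ j) (y : Fin T → Bool) :
    eps (flip j y) i = eps y i := by
  simp [eps, flip, Function.update_of_ne h]

noncomputable def W (a : Fin T → ℝ) (n : ℕ) (y : Fin T → Bool) : ℝ :=
  ∑ i : Fin T, if (i : ℕ) < n then eps y i * a i else 0

noncomputable def R (a : Fin T → ℝ) : ℕ → (Fin T → Bool) → ℝ
  | 0, _ => 0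
  | (n+1), y => max (R a n y) |W a (n+1) y|

lemma W_zero (a : Fin T → ℝ) (y : Fin T → Bool) : W a 0 y = 0 := by simp [W]

lemma W_succ (a : Fin T → ℝ) {n : ℕ} (hn : n < T) (y : Fin T → Bool) :
    W a (n+1) y = W a n y + eps y ⟨n, hn⟩ * a ⟨n, hn⟩ := by
  have key : ∀ i : Fin T, (if (i : ℕ) < n + 1 then eps y i * a i else 0)
      = (if (i : ℕ) < n then eps y i * a i else 0)
        + (if i = ⟨n, hn⟩ then eps y i * a i else 0) := by
    intro i
    rcases lt_trichotomy (i : ℕ) n with h | h | h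
    · rw [if_pos (by omega), if_pos h, if_neg (by
        intro hc; rw [hc] at h; simp at h), add_zero]
    · have : i = ⟨n, hn⟩ := Fin.ext h
      rw [if_pos (by omega), if_neg (by omega), if_pos this, zero_add]
    · rw [if_neg (by omega), if_neg (by omega), if_neg (by
        intro hc; rw [hc] at h; simp at h), add_zero]
  rw [W, Finset.sum_congr rfl (fun i _ => key i), Finset.sum_add_distrib]
  congr 1
  rw [Finset.sum_ite_eq' Finset.univ (⟨n, hn⟩ : Fin T) (fun i => eps y i * a i)]
  simp

lemma W_flip (a : Fin T → ℝ) {n : ℕ} {j : Fin T} (h : n ≤ (j : ℕ)) (y : Fin T → Bool) :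
    W a n (flip j y) = W a n y := by
  refine Finset.sum_congr rfl (fun i _ => ?_)
  by_cases hi : (i : ℕ) < n
  · rw [if_pos hi, if_pos hi, eps_flip_ne (by intro hc; subst hc; omega)]
  · rw [if_neg hi, if_neg hi]

lemma R_flip (a : Fin T → ℝ) {n : ℕ} {j : Fin T} (h : n ≤ (j : ℕ)) (y : Fin T → Bool) :
    R a n (flip j y) = R a n y := by
  induction n with
  | zero => rfl
  | succ m ih =>
      rw [R, R, ih (by omega), W_flip a h]

lemma R_nonneg (a : Fin T → ℝ) (n : ℕ) (y : Fin T → Bool) : 0 ≤ R a n y := by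
  induction n with
  | zero => exact le_refl 0
  | succ m ih => exact le_trans ih (le_max_left _ _)

lemma R_mono (a : Fin T → ℝ) (y : Fin T → Bool) : Monotone (fun n => R a n y) := by
  apply monotone_nat_of_le_succ
  intro n; exact le_max_left _ _

lemma abs_W_le_R (a : Fin T → ℝ) (n : ℕ) (y : Fin T → Bool) : |W a n y| ≤ R a n y := by
  cases n with
  | zero => rw [W_zero, abs_zero]; exact le_refl 0
  | succ m => exact le_max_right _ _


lemma pathwise_Q (u M : ℕ → ℝ) (h0 : u 0 = 0) (hM0 : M 0 = 0)
    (hMs : ∀ n, M (n+1) = max (M n) (u (n+1))) (n : ℕ) :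
    4 * ∑ t ∈ Finset.range n, M t * (u (t+1) - u t) ≤ 4 * M n * u n - 2 * (M n)^2 := by
  induction n with
  | zero => simp [h0, hM0]
  | succ m ih =>
      rw [Finset.sum_range_succ, mul_add]
      rcases max_cases (M m) (u (m+1)) with ⟨hmax, hle⟩ | ⟨hmax, hlt⟩
      · rw [hMs m, hmax]; nlinarith
      · rw [hMs m, hmax]; nlinarith [sq_nonneg (u (m+1) - M m)]

lemma pathwise_doob (u M : ℕ → ℝ) (h0 : u 0 = 0) (hM0 : M 0 = 0)
    (hMs : ∀ n, M (n+1) = max (M n) (u (n+1))) (n : ℕ) :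
    (M n)^2 ≤ 4 * (u n)^2 - 4 * ∑ t ∈ Finset.range n, M t * (u (t+1) - u t) := by
  have h := pathwise_Q u M h0 hM0 hMs n
  nlinarith [sq_nonneg (2 * u n - M n)]

lemma transform_nonneg (a : Fin T → ℝ) {t : ℕ} (ht : t < T) :
    0 ≤ ∑ y : Fin T → Bool, R a t y * (|W a (t+1) y| - |W a t y|) := by
  set j : Fin T := ⟨t, ht⟩ with hj
  set F : (Fin T → Bool) → ℝ := fun y => R a t y * (|W a (t+1) y| - |W a t y|) with hF
  have hflip : ∑ y : Fin T → Bool, F (flip j y) = ∑ y : Fin T → Bool, F y := sum_flip j F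
  have h2 : 2 * ∑ y : Fin T → Bool, F y
      = ∑ y : Fin T → Bool, (F y + F (flip j y)) := by
    rw [Finset.sum_add_distrib, hflip]; ring
  have hpt : ∀ y : Fin T → Bool, 0 ≤ F y + F (flip j y) := by
    intro y
    have hW : W a (t+1) (flip j y) = W a t y - eps y j * a j := by
      rw [W_succ a ht, W_flip a (le_refl t), ← hj, eps_flip_same]; ring
    have hW2 : W a (t+1) y = W a t y + eps y j * a j := W_succ a ht y
    have hRf : R a t (flip j y) = R a t y := R_flip a (le_refl t) y
    have hWf : W a t (flip j y) = W a t y := W_flip a (le_refl t) y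
    rw [hF]
    simp only [hW, hW2, hRf, hWf]
    have habs : 2 * |W a t y| ≤ |W a t y + eps y j * a j| + |W a t y - eps y j * a j| := by
      have := abs_add_le (W a t y + eps y j * a j) (W a t y - eps y j * a j)
      have h2 : (W a t y + eps y j * a j) + (W a t y - eps y j * a j) = 2 * W a t y := by ring
      rw [h2, abs_mul, abs_two] at this
      exact this
    nlinarith [R_nonneg a t y]
  have : 0 ≤ 2 * ∑ y : Fin T → Bool, F y := by
    rw [h2]; exact Finset.sum_nonneg (fun y _ => hpt y)
  linarith

lemma sum_eps_eps_ne {i j : Fin T} (h : i ≠ j) :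
    ∑ y : Fin T → Bool, eps y i * eps y j = 0 := by
  set F : (Fin T → Bool) → ℝ := fun y => eps y i * eps y j with hF
  have hflip : ∑ y : Fin T → Bool, F (flip j y) = ∑ y : Fin T → Bool, F y := sum_flip j F
  have : ∀ y : Fin T → Bool, F (flip j y) = - F y := by
    intro y; rw [hF]; simp only [eps_flip_ne h, eps_flip_same]; ring
  rw [Finset.sum_congr rfl (fun y _ => this y), Finset.sum_neg_distrib] at hflip
  linarith

lemma card_cube : Fintype.card (Fin T → Bool) = 2 ^ T := by
  simp [Fintype.card_fun]

lemma sum_WT_sq (a : Fin T → ℝ) (ha : ∀ i, |a i| ≤ 1) :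
    ∑ y : Fin T → Bool, (W a T y)^2 ≤ 2 ^ T * T / 4 := by
  have hWT : ∀ y : Fin T → Bool, W a T y = ∑ i : Fin T, eps y i * a i := by
    intro y; exact Finset.sum_congr rfl (fun i _ => if_pos i.2)
  have expand : ∀ y : Fin T → Bool,
      (W a T y)^2 = ∑ i : Fin T, ∑ k : Fin T, (eps y i * eps y k) * (a i * a k) := by
    intro y
    rw [hWT, sq, Finset.sum_mul_sum]
    exact Finset.sum_congr rfl (fun i _ => Finset.sum_congr rfl (fun k _ => by ring))
  calc ∑ y : Fin T → Bool, (W a T y)^2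
      = ∑ i : Fin T, ∑ k : Fin T, (∑ y : Fin T → Bool, eps y i * eps y k) * (a i * a k) := by
        rw [Finset.sum_congr rfl (fun y _ => expand y), Finset.sum_comm]
        refine Finset.sum_congr rfl (fun i _ => ?_)
        rw [Finset.sum_comm]
        refine Finset.sum_congr rfl (fun k _ => ?_)
        rw [Finset.sum_mul]
    _ = ∑ i : Fin T, (∑ y : Fin T → Bool, eps y i * eps y i) * (a i * a i) := by
        refine Finset.sum_congr rfl (fun i _ => ?_)
        refine Finset.sum_eq_single_of_mem i (Finset.mem_univ i) (fun k _ hki => ?_)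
        rw [sum_eps_eps_ne (Ne.symm hki), zero_mul]
    _ ≤ 2 ^ T * T / 4 := by
        have heps : ∀ (i : Fin T), ∑ y : Fin T → Bool, eps y i * eps y i
            = 2 ^ T * (1/4 : ℝ) := by
          intro i
          have : ∀ y : Fin T → Bool, eps y i * eps y i = (1/4 : ℝ) := by
            intro y; cases h : y i <;> simp [eps, h] <;> norm_num
          rw [Finset.sum_congr rfl (fun y _ => this y), Finset.sum_const, card_univ, card_cube]
          simp [nsmul_eq_mul]
        have hbound : ∀ i : Fin T, (∑ y : Fin T → Bool, eps y i * eps y i) * (a i * a i)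
            ≤ 2 ^ T * (1/4 : ℝ) := by
          intro i
          rw [heps i]
          have h1 : a i * a i ≤ 1 := by nlinarith [abs_le.mp (ha i)]
          have h0 : (0:ℝ) ≤ 2 ^ T * (1/4 : ℝ) := by positivity
          nlinarith
        calc ∑ i : Fin T, (∑ y : Fin T → Bool, eps y i * eps y i) * (a i * a i)
            ≤ ∑ _i : Fin T, 2 ^ T * (1/4 : ℝ) := Finset.sum_le_sum (fun i _ => hbound i)
          _ = 2 ^ T * T / 4 := by
              rw [Finset.sum_const, card_univ, Fintype.card_fin, nsmul_eq_mul]; ring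

end SCE17

open SCE17

/-- for sorted predictions, the subsampled step calibration error
(averaged over uniform y ∈ {0,1}^T) is at most half the maximal prefix deviation
plus `√T`. -/
theorem stepCEsub_le_half_stepCE_add_sqrtT (T : ℕ) (x p : Fin T → ℝ)
    (hx : ∀ t, x t = 0 ∨ x t = 1) (hp : ∀ t, p t ∈ Set.Icc (0:ℝ) 1)
    (hsorted : Monotone p) :
    (1 / 2 ^ T : ℝ) * ∑ y : Fin T → Bool,
        sSup {v : ℝ | ∃ α ∈ Set.Icc (0:ℝ) 1,
          v = |∑ t, (if y t then (1:ℝ) else 0) * (x t - p t)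
                      * (if p t ≤ α then (1:ℝ) else 0)|} ≤
      (1/2) * (⨆ t : Fin T, |∑ i ∈ Finset.Iic t, (x i - p i)|)
        + Real.sqrt T := by
  classical
  set a : Fin T → ℝ := fun i => x i - p i with ha
  have haa : ∀ i, a i = x i - p i := fun i => rfl
  set C : ℝ := ⨆ t : Fin T, |∑ i ∈ Finset.Iic t, (x i - p i)| with hC
  have hC0 : 0 ≤ C := by
    rcases Nat.eq_zero_or_pos T with h0 | h0
    · subst h0
      rw [hC]
      have : IsEmpty (Fin 0) := by infer_instance
      simp [Real.iSup_of_isEmpty]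
    · have t0 : Fin T := ⟨0, h0⟩
      calc (0:ℝ) ≤ |∑ i ∈ Finset.Iic t0, (x i - p i)| := abs_nonneg _
        _ ≤ C := le_ciSup (f := fun t : Fin T => |∑ i ∈ Finset.Iic t, (x i - p i)|) (Set.Finite.bddAbove (Set.finite_range _)) t0
  have ha1 : ∀ i, |a i| ≤ 1 := by
    intro i
    rw [haa, abs_le]
    rcases hx i with h | h <;> rcases hp i with ⟨h1, h2⟩ <;>
      constructor <;> nlinarith
  -- per-y bound
  have key : ∀ y : Fin T → Bool,
      sSup {v : ℝ | ∃ α ∈ Set.Icc (0:ℝ) 1,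
          v = |∑ t, (if y t then (1:ℝ) else 0) * (x t - p t)
                      * (if p t ≤ α then (1:ℝ) else 0)|}
      ≤ (1/2) * C + R a T y := by
    intro y
    apply csSup_le
    · exact ⟨_, 0, ⟨le_refl 0, zero_le_one⟩, rfl⟩
    · rintro v ⟨α, hα, rfl⟩
      have hsum1 : ∑ t, (if y t then (1:ℝ) else 0) * (x t - p t)
            * (if p t ≤ α then (1:ℝ) else 0)
          = ∑ t : Fin T, if p t ≤ α then (if y t then (1:ℝ) else 0) * a t else 0 := by
        refine Finset.sum_congr rfl (fun t _ => ?_)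
        by_cases hpt : p t ≤ α <;> simp [hpt, haa]
      rw [hsum1]
      by_cases hex : ∃ t0 : Fin T, p t0 ≤ α
      · set I : Finset (Fin T) := Finset.univ.filter (fun t => p t ≤ α) with hI
        have hne : I.Nonempty := by
          obtain ⟨t0, ht0⟩ := hex
          exact ⟨t0, Finset.mem_filter.mpr ⟨Finset.mem_univ t0, ht0⟩⟩
        set m : Fin T := I.max' hne with hm
        have hpm : p m ≤ α := (Finset.mem_filter.mp (I.max'_mem hne)).2
        have hiff : ∀ t : Fin T, (p t ≤ α) ↔ (t : ℕ) < (m : ℕ) + 1 := by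
          intro t
          constructor
          · intro h
            have : t ≤ m := I.le_max' t (Finset.mem_filter.mpr ⟨Finset.mem_univ t, h⟩)
            rw [Fin.le_def] at this; omega
          · intro h
            have htm : t ≤ m := by rw [Fin.le_def]; omega
            exact le_trans (hsorted htm) hpm
        have hsum2 : ∑ t : Fin T, (if p t ≤ α then (if y t then (1:ℝ) else 0) * a t else 0)
            = ∑ t : Fin T, (if (t : ℕ) < (m : ℕ) + 1 then (if y t then (1:ℝ) else 0) * a t else 0) := by
          refine Finset.sum_congr rfl (fun t _ => ?_)
          by_cases h : p t ≤ α
          · rw [if_pos h, if_pos ((hiff t).mp h)]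
          · rw [if_neg h, if_neg (fun hc => h ((hiff t).mpr hc))]
        have hsplit : ∀ t : Fin T,
            (if (t : ℕ) < (m : ℕ) + 1 then (if y t then (1:ℝ) else 0) * a t else 0)
            = (if (t : ℕ) < (m : ℕ) + 1 then a t else 0) / 2
              + (if (t : ℕ) < (m : ℕ) + 1 then eps y t * a t else 0) := by
          intro t
          by_cases hc : (t : ℕ) < (m : ℕ) + 1 <;> cases hyt : y t <;>
            simp [hc, hyt, eps] <;> ring
        have hsum3 : ∑ t : Fin T, (if (t : ℕ) < (m : ℕ) + 1 then (if y t then (1:ℝ) else 0) * a t else 0)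
            = (∑ t : Fin T, if (t : ℕ) < (m : ℕ) + 1 then a t else 0) / 2
              + W a ((m : ℕ) + 1) y := by
          rw [Finset.sum_congr rfl (fun t _ => hsplit t), Finset.sum_add_distrib,
            Finset.sum_div]
          rfl
        have hA : (∑ t : Fin T, if (t : ℕ) < (m : ℕ) + 1 then a t else 0)
            = ∑ i ∈ Finset.Iic m, (x i - p i) := by
          have hmem : ∀ t : Fin T, ((t : ℕ) < (m : ℕ) + 1) ↔ t ∈ Finset.Iic m := by
            intro t; rw [Finset.mem_Iic, Fin.le_def]; omega
          rw [Finset.sum_congr rfl (fun t _ => by rw [if_congr (hmem t) rfl rfl])]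
          rw [Finset.sum_ite_mem, Finset.univ_inter]
        have hAle : |∑ i ∈ Finset.Iic m, (x i - p i)| ≤ C :=
          le_ciSup (f := fun t : Fin T => |∑ i ∈ Finset.Iic t, (x i - p i)|) (Set.Finite.bddAbove (Set.finite_range _)) m
        have hWle : |W a ((m : ℕ) + 1) y| ≤ R a T y :=
          le_trans (abs_W_le_R a _ y) (R_mono a y (show (m : ℕ) + 1 ≤ T from m.2))
        rw [hsum2, hsum3, hA]
        calc |(∑ i ∈ Finset.Iic m, (x i - p i)) / 2 + W a ((m : ℕ) + 1) y|
            ≤ |(∑ i ∈ Finset.Iic m, (x i - p i)) / 2| + |W a ((m : ℕ) + 1) y| := abs_add_le _ _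
          _ ≤ (1/2) * C + R a T y := by
              rw [abs_div]
              have : |(2:ℝ)| = 2 := by norm_num
              rw [this]
              have := hAle
              linarith [hWle]
      · have : ∀ t : Fin T, (if p t ≤ α then (if y t then (1:ℝ) else 0) * a t else 0) = 0 := by
          intro t
          rw [if_neg (fun hc => hex ⟨t, hc⟩)]
        rw [Finset.sum_congr rfl (fun t _ => this t), Finset.sum_const_zero, abs_zero]
        have := R_nonneg a T y
        linarith
  -- sum the per-y bound
  have hsum_le : ∑ y : Fin T → Bool,
      sSup {v : ℝ | ∃ α ∈ Set.Icc (0:ℝ) 1,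
          v = |∑ t, (if y t then (1:ℝ) else 0) * (x t - p t)
                      * (if p t ≤ α then (1:ℝ) else 0)|}
      ≤ ∑ y : Fin T → Bool, ((1/2) * C + R a T y) :=
    Finset.sum_le_sum (fun y _ => key y)
  have hRsum : ∑ y : Fin T → Bool, R a T y ≤ 2 ^ T * Real.sqrt T := by
    have hdoob : ∀ y : Fin T → Bool, (R a T y)^2
        ≤ 4 * (W a T y)^2
          - 4 * ∑ t ∈ Finset.range T, R a t y * (|W a (t+1) y| - |W a t y|) := by
      intro y
      have h := pathwise_doob (fun n => |W a n y|) (fun n => R a n y)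
        (by simp [W_zero]) rfl (fun n => rfl) T
      simpa [sq_abs] using h
    have h1 : ∑ y : Fin T → Bool, (R a T y)^2 ≤ 2 ^ T * T := by
      calc ∑ y : Fin T → Bool, (R a T y)^2
          ≤ ∑ y : Fin T → Bool, (4 * (W a T y)^2
            - 4 * ∑ t ∈ Finset.range T, R a t y * (|W a (t+1) y| - |W a t y|)) :=
            Finset.sum_le_sum (fun y _ => hdoob y)
        _ = 4 * (∑ y : Fin T → Bool, (W a T y)^2)
            - 4 * ∑ t ∈ Finset.range T, (∑ y : Fin T → Bool,
                R a t y * (|W a (t+1) y| - |W a t y|)) := by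
            rw [Finset.sum_sub_distrib, ← Finset.mul_sum, ← Finset.mul_sum]
            congr 1
            rw [Finset.sum_comm]
        _ ≤ 4 * (2 ^ T * T / 4) - 4 * 0 := by
            have h2 := sum_WT_sq a ha1
            have h3 : 0 ≤ ∑ t ∈ Finset.range T, (∑ y : Fin T → Bool,
                R a t y * (|W a (t+1) y| - |W a t y|)) :=
              Finset.sum_nonneg (fun t ht =>
                transform_nonneg a (Finset.mem_range.mp ht))
            nlinarith
        _ = 2 ^ T * T := by ring
    have h2 : (∑ y : Fin T → Bool, R a T y)^2 ≤ (2:ℝ) ^ T * (2 ^ T * T) := by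
      have hcs := sq_sum_le_card_mul_sum_sq
        (s := (Finset.univ : Finset (Fin T → Bool))) (f := fun y => R a T y)
      have hcard : ((Finset.univ : Finset (Fin T → Bool)).card : ℝ) = 2 ^ T := by
        rw [Finset.card_univ, card_cube]; push_cast; ring
      calc (∑ y : Fin T → Bool, R a T y)^2
          ≤ ((Finset.univ : Finset (Fin T → Bool)).card : ℝ)
            * ∑ y : Fin T → Bool, (R a T y)^2 := hcs
        _ ≤ (2:ℝ) ^ T * (2 ^ T * T) := by
            rw [hcard]
            have : (0:ℝ) ≤ (2:ℝ)^T := by positivity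
            nlinarith
    have h3 : ∑ y : Fin T → Bool, R a T y ≤ Real.sqrt (((2:ℝ) ^ T)^2 * T) := by
      rw [← Real.sqrt_sq (Finset.sum_nonneg (fun y _ => R_nonneg a T y))]
      apply Real.sqrt_le_sqrt
      nlinarith [h2]
    rwa [Real.sqrt_mul (by positivity), Real.sqrt_sq (by positivity)] at h3
  have hfinal : ∑ y : Fin T → Bool, ((1/2) * C + R a T y)
      ≤ 2 ^ T * ((1/2) * C) + 2 ^ T * Real.sqrt T := by
    rw [Finset.sum_add_distrib, Finset.sum_const, Finset.card_univ, card_cube,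
      nsmul_eq_mul]
    push_cast
    linarith [hRsum]
  have h2T : (0:ℝ) < 2 ^ T := by positivity
  calc (1 / 2 ^ T : ℝ) * ∑ y : Fin T → Bool,
        sSup {v : ℝ | ∃ α ∈ Set.Icc (0:ℝ) 1,
          v = |∑ t, (if y t then (1:ℝ) else 0) * (x t - p t)
                      * (if p t ≤ α then (1:ℝ) else 0)|}
      ≤ (1 / 2 ^ T : ℝ) * (2 ^ T * ((1/2) * C) + 2 ^ T * Real.sqrt T) := by
        apply mul_le_mul_of_nonneg_left _ (by positivity)
        exact le_trans hsum_le hfinal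
    _ = (1/2) * C + Real.sqrt T := by
        field_simp
end

section
/- Fix k ≥ 2 and a probability distribution w on {±1} × [k]. For σ ∈ {±1}, i ∈ [k], x ∈ {0,1}, q ∈ [0,1], define ℓ_{σ,i}(x,q) = σ·1[q ≤ (i−1)/(k−1)]·(x − q), and C_q := E_{(σ,i)~w}[σ·1[q ≤ (i−1)/(k−1)]]. Then there exists a distribution 𝐩 supported on at most two adjacent grid points of {0, 1/(k−1), …, 1} such that max_{x ∈ {0,1}} E_{q~𝐩}[E_{(σ,i)~w}[ℓ_{σ,i}(x,q)]] ≤ 1/(k−1). -/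
open Finset
open scoped Classical

/-- per-step lemma for the step-calibration algorithm: for any
distribution `w` on {±1} × [k], there is a prediction distribution supported on
at most two adjacent grid points whose worst-case expected loss is at most 1/(k-1). -/
theorem per_step_hedge_lemma (k : ℕ) (hk : 2 ≤ k)
    (w : Bool × Fin k → ℝ) (hw0 : ∀ z, 0 ≤ w z) (hw1 : ∑ z, w z = 1) :
    ∃ q₁ q₂ lam : ℝ,
      (∃ i : Fin k, q₁ = (i : ℝ) / (k - 1)) ∧
      (∃ i : Fin k, q₂ = (i : ℝ) / (k - 1)) ∧
      (q₂ = q₁ ∨ q₂ = q₁ + 1 / (k - 1)) ∧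
      lam ∈ Set.Icc (0:ℝ) 1 ∧
      ∀ x : ℝ, (x = 0 ∨ x = 1) →
        lam * (∑ z : Bool × Fin k, w z *
            ((if z.1 then (1:ℝ) else -1) * (if q₁ ≤ (z.2 : ℝ) / (k - 1) then 1 else 0)
              * (x - q₁)))
        + (1 - lam) * (∑ z : Bool × Fin k, w z *
            ((if z.1 then (1:ℝ) else -1) * (if q₂ ≤ (z.2 : ℝ) / (k - 1) then 1 else 0)
              * (x - q₂))) ≤ 1 / (k - 1) := by
  have hk2 : (2:ℝ) ≤ (k:ℝ) := by exact_mod_cast hk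
  have hkpos : (0:ℝ) < (k:ℝ) - 1 := by linarith
  set C : ℝ → ℝ := fun q => ∑ z : Bool × Fin k, w z *
      ((if z.1 then (1:ℝ) else -1) * (if q ≤ (z.2 : ℝ) / ((k:ℝ) - 1) then 1 else 0))
      with hC
  have hsum : ∀ x q : ℝ, (∑ z : Bool × Fin k, w z *
      ((if z.1 then (1:ℝ) else -1) * (if q ≤ (z.2 : ℝ) / ((k:ℝ)-1) then 1 else 0) * (x - q)))
      = C q * (x - q) := by
    intro x q
    rw [hC, Finset.sum_mul]
    apply Finset.sum_congr rfl
    intro z _; ring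
  have hCb : ∀ q : ℝ, |C q| ≤ 1 := by
    intro q
    rw [hC]
    refine le_trans (Finset.abs_sum_le_sum_abs _ _) (le_trans (Finset.sum_le_sum ?_) (le_of_eq hw1))
    intro z _
    have hw := hw0 z
    split_ifs <;> simp [abs_mul, abs_of_nonneg hw, hw]
  have hcast : ((k - 1 : ℕ) : ℝ) = (k:ℝ) - 1 := by
    have : 1 ≤ k := by omega
    push_cast [this]; ring
  -- grid point 1 = (k-1)/(k-1)
  have hone : (((⟨k-1, by omega⟩ : Fin k) : ℕ) : ℝ) / ((k:ℝ) - 1) = 1 := by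
    simp only [hcast]
    exact div_self (ne_of_gt hkpos)
  by_cases hA : 0 ≤ C 1
  · -- predict 1 deterministically
    refine ⟨1, 1, 1, ⟨⟨k-1, by omega⟩, hone.symm⟩, ⟨⟨k-1, by omega⟩, hone.symm⟩,
      Or.inl rfl, ⟨le_refl _ |>.trans zero_le_one, le_refl 1⟩, ?_⟩
    intro x hx
    simp only [hsum]
    have hx1 : x - 1 ≤ 0 := by rcases hx with h | h <;> simp [h]
    have : C 1 * (x - 1) ≤ 0 := mul_nonpos_of_nonneg_of_nonpos hA hx1
    have h0 : (0:ℝ) ≤ 1 / ((k:ℝ) - 1) := by positivity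
    nlinarith
  push_neg at hA
  by_cases hB : C 0 ≤ 0
  · -- predict 0 deterministically
    have hzero : (((⟨0, by omega⟩ : Fin k) : ℕ) : ℝ) / ((k:ℝ) - 1) = 0 := by simp
    refine ⟨0, 0, 1, ⟨⟨0, by omega⟩, hzero.symm⟩, ⟨⟨0, by omega⟩, hzero.symm⟩,
      Or.inl rfl, ⟨zero_le_one, le_refl 1⟩, ?_⟩
    intro x hx
    simp only [hsum]
    have hx0 : 0 ≤ x := by rcases hx with h | h <;> simp [h]
    have : C 0 * (x - 0) ≤ 0 := by
      have := mul_nonpos_of_nonpos_of_nonneg hB hx0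
      simpa using this
    have h0 : (0:ℝ) ≤ 1 / ((k:ℝ) - 1) := by positivity
    nlinarith
  push_neg at hB
  -- intermediate case: C 0 > 0, C 1 < 0
  set P : ℕ → Prop := fun j => C ((j:ℝ)/((k:ℝ)-1)) ≤ 0 with hP
  have hPk : P (k-1) := by
    rw [hP]; simp only [hcast, div_self (ne_of_gt hkpos)]; linarith
  have hEx : ∃ j, P j := ⟨k-1, hPk⟩
  set m := Nat.find hEx with hm
  have hmspec : P m := Nat.find_spec hEx
  have hmle : m ≤ k - 1 := Nat.find_min' hEx hPk
  have hm0 : m ≠ 0 := by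
    intro h
    rw [hP] at hmspec
    rw [h] at hmspec
    simp at hmspec
    linarith
  have hm1 : ¬ P (m-1) := Nat.find_min hEx (by omega)
  rw [hP] at hmspec hm1
  set q₁ : ℝ := ((m-1:ℕ):ℝ)/((k:ℝ)-1) with hq1
  set q₂ : ℝ := ((m:ℕ):ℝ)/((k:ℝ)-1) with hq2
  have hC1 : 0 < C q₁ := not_le.mp hm1
  have hC2 : C q₂ ≤ 0 := hmspec
  have hden : 0 < C q₁ - C q₂ := by linarith
  set lam : ℝ := -C q₂ / (C q₁ - C q₂) with hlam
  have hlam0 : 0 ≤ lam := by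
    apply div_nonneg (by linarith) (le_of_lt hden)
  have hlam1 : lam ≤ 1 := by
    rw [hlam, div_le_one hden]; linarith
  have hzero : lam * C q₁ + (1 - lam) * C q₂ = 0 := by
    rw [hlam]; field_simp; ring
  have hq2eq : q₂ = q₁ + 1 / ((k:ℝ) - 1) := by
    rw [hq1, hq2, ← add_div]
    congr 1
    have : 1 ≤ m := by omega
    push_cast [this]; ring
  refine ⟨q₁, q₂, lam, ⟨⟨m-1, by omega⟩, by simp [hq1]⟩, ⟨⟨m, by omega⟩, by simp [hq2]⟩,
    Or.inr hq2eq, ⟨hlam0, hlam1⟩, ?_⟩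
  intro x hx
  rw [hsum, hsum]
  have key : lam * (C q₁ * (x - q₁)) + (1 - lam) * (C q₂ * (x - q₂))
      = (lam * C q₁ + (1 - lam) * C q₂) * (x - q₁) - (1 - lam) * C q₂ * (q₂ - q₁) := by
    ring
  rw [key, hzero]
  have hd : q₂ - q₁ = 1 / ((k:ℝ) - 1) := by rw [hq2eq]; ring
  rw [hd]
  have hC2b : -C q₂ ≤ 1 := by
    have := hCb q₂
    have := neg_abs_le (C q₂)
    linarith
  have h1 : (1 - lam) * (-C q₂) ≤ 1 := by nlinarith
  have h2 : (0:ℝ) < 1 / ((k:ℝ) - 1) := by positivity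
  nlinarith
end
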